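/- arXiv:1510.00997 — 9 statements merged into one kernel-verified Lean document; each statement's English description precedes it below -/
import Mathlib

section
/- Let k be an algebraically closed field of characteristic 2, σ the automorphism of SL₃(k) given by σ(g) = J·(gᵀ)⁻¹·J with J the 3×3 antidiagonal permutation matrix, G := SL₃(k) ⋊ ⟨σ⟩, and for x ∈ k set ε(x) := I₃ + x·E₁₃ ∈ SL₃(k). Then for every a, b ∈ k there exists g ∈ G such that g·(ε(a), σ)·g⁻¹ = (ε(b), σ) and g·(ε(1), 1)·g⁻¹ = (ε(1), 1), where (n, h) denotes the element of the semidirect product with normal part n ∈ SL₃(k) and automorphism part h ∈ ⟨σ⟩. (Explicitly, one may take g = (ε_α(x)·ε_β(x), 1) with x² = a + b, ε_α(x) = I₃ + x·E₁₂, ε_β(x) = I₃ + x·E₂₃.) -/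
set_option linter.unusedSectionVars false

open Matrix

noncomputable section

/-- `SL₃(k)`. -/
abbrev SL3 (k : Type*) [Field k] := Matrix.SpecialLinearGroup (Fin 3) k

/-- The 3×3 antidiagonal permutation matrix `J`. -/
def Jmat (k : Type*) [Field k] : Matrix (Fin 3) (Fin 3) k := !![0,0,1;0,1,0;1,0,0]

lemma Jmat_mul_Jmat (k : Type*) [Field k] : Jmat k * Jmat k = 1 := by
  ext i j
  fin_cases i <;> fin_cases j <;>
    simp [Jmat, Matrix.mul_apply, Fin.sum_univ_succ, Matrix.one_apply]

lemma Jmat_det (k : Type*) [Field k] [CharP k 2] : (Jmat k).det = 1 := by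
  simp [Jmat, Matrix.det_fin_three, CharTwo.neg_eq]

variable (k : Type*) [Field k] [CharP k 2]

/-- `J` as an element of `SL₃(k)` (its determinant is `-1 = 1` in characteristic two). -/
def JSL : SL3 k := ⟨Jmat k, Jmat_det k⟩

lemma JSL_mul_JSL : JSL k * JSL k = 1 := Subtype.ext (by
  exact Jmat_mul_Jmat k)

/-- Transpose, as a map `SL₃(k) → SL₃(k)`. -/
def TSL (g : SL3 k) : SL3 k :=
  ⟨(g : Matrix (Fin 3) (Fin 3) k)ᵀ, by simp⟩

lemma TSL_mul (g h : SL3 k) : TSL k (g * h) = TSL k h * TSL k g :=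
  Subtype.ext (by simp [TSL, Matrix.transpose_mul]; rfl)

lemma TSL_inv (g : SL3 k) : TSL k g⁻¹ = (TSL k g)⁻¹ :=
  Subtype.ext (by
    simp [TSL, Matrix.SpecialLinearGroup.coe_inv, Matrix.adjugate_transpose]; rfl)

lemma TSL_TSL (g : SL3 k) : TSL k (TSL k g) = g := Subtype.ext (by simp [TSL])

/-- The automorphism `g ↦ (gᵀ)⁻¹` of `SL₃(k)`. -/
def transposeInvAut : MulAut (SL3 k) :=
{ toFun := fun g => TSL k g⁻¹
  invFun := fun g => TSL k g⁻¹
  left_inv := fun g => by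
    show TSL k (TSL k g⁻¹)⁻¹ = g
    simp only [TSL_inv, TSL_TSL, inv_inv]
  right_inv := fun g => by
    show TSL k (TSL k g⁻¹)⁻¹ = g
    simp only [TSL_inv, TSL_TSL, inv_inv]
  map_mul' := fun g h => by
    show TSL k (g * h)⁻¹ = TSL k g⁻¹ * TSL k h⁻¹
    rw [_root_.mul_inv_rev, TSL_mul] }

/-- The order-2 (graph) automorphism `σ` of `SL₃(k)` given by `σ(g) = J ⬝ (gᵀ)⁻¹ ⬝ J`
(recall that `J⁻¹ = J`). -/
def sigmaAut : MulAut (SL3 k) :=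
  (transposeInvAut k).trans (MulAut.conj (JSL k))

/-- The unipotent element `ε(x) = I₃ + x·E₁₃` of `SL₃(k)`. -/
def eps (x : k) : SL3 k :=
  ⟨!![1,0,x;0,1,0;0,0,1], by simp [Matrix.det_fin_three]⟩

/-- The non-connected reductive group `G = SL₃(k) ⋊ ⟨σ⟩`. -/
abbrev Ghat := SL3 k ⋊[(Subgroup.zpowers (sigmaAut k)).subtype] (Subgroup.zpowers (sigmaAut k))

/-- `σ` as an element of the subgroup `⟨σ⟩` of `Aut(SL₃(k))`. -/
def sigEl : Subgroup.zpowers (sigmaAut k) := ⟨sigmaAut k, Subgroup.mem_zpowers _⟩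

end

/-!
Conjugating by `u = ε_α(x) ε_β(x)` (an element of `SL₃(k)`) sends `(n, h)` to `(u n h(u)⁻¹, h)`.
The matrix `u` is persymmetric, `J uᵀ J = u`, so `σ(u⁻¹) = u`; being upper unitriangular,
it commutes with the elements `ε(·)`, which are central in the upper unitriangular group.
In characteristic two `u² = ε(x²)`, hence `u ε(a) σ(u⁻¹) = ε(a) u² = ε(a + x²)`, while
`u ε(1) u⁻¹ = ε(1)`. Choosing `x² = a + b`, possible as `k` is algebraically closed,
gives `ε(a + x²) = ε(b)`.
-/

theorem SemidirectProduct.inl_mul_mk_mul_inl_inv {N G : Type*} [Group N] [Group G]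
    {φ : G →* MulAut N} (m n : N) (g : G) :
    inl m * (⟨n, g⟩ : N ⋊[φ] G) * (inl m)⁻¹ = ⟨m * n * φ g m⁻¹, g⟩ := by
  ext <;> simp [mul_assoc]

section

variable {k : Type*} [Field k] [CharP k 2]

/-- `ε_α(x) ε_β(x) = (I₃ + x E₁₂)(I₃ + x E₂₃) = I₃ + x E₁₂ + x E₂₃ + x² E₁₃`. -/
def epsAlphaBeta (x : k) : SL3 k :=
  ⟨!![1, x, x ^ 2; 0, 1, x; 0, 0, 1], by simp [Matrix.det_fin_three]⟩

lemma eps_add (a b : k) : eps k (a + b) = eps k a * eps k b := by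
  apply Subtype.val_injective
  rw [Matrix.SpecialLinearGroup.coe_mul]
  simp [eps, add_comm]

lemma epsAlphaBeta_mul_self (x : k) : epsAlphaBeta x * epsAlphaBeta x = eps k (x ^ 2) := by
  apply Subtype.val_injective
  rw [Matrix.SpecialLinearGroup.coe_mul]
  simp only [epsAlphaBeta, eps, mul_fin_three]
  simp [sq, CharTwo.add_self_eq_zero]

lemma commute_epsAlphaBeta_eps (x c : k) : Commute (epsAlphaBeta x) (eps k c) := by
  apply Subtype.val_injective
  rw [Matrix.SpecialLinearGroup.coe_mul, Matrix.SpecialLinearGroup.coe_mul]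
  simp [epsAlphaBeta, eps, add_comm]

lemma JSL_inv : (JSL k)⁻¹ = JSL k :=
  inv_eq_of_mul_eq_one_right (JSL_mul_JSL k)

lemma coe_sigmaAut_inv (g : SL3 k) :
    ((sigmaAut k g⁻¹ : SL3 k) : Matrix (Fin 3) (Fin 3) k) = Jmat k * (g : Matrix _ _ k)ᵀ * Jmat k := by
  change ((JSL k * TSL k g⁻¹⁻¹ * (JSL k)⁻¹ : SL3 k) : Matrix (Fin 3) (Fin 3) k) = _
  rw [inv_inv, JSL_inv]
  rfl

lemma sigmaAut_inv_epsAlphaBeta (x : k) : sigmaAut k (epsAlphaBeta x)⁻¹ = epsAlphaBeta x := by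
  apply Subtype.val_injective
  rw [coe_sigmaAut_inv]
  ext i j
  fin_cases i <;> fin_cases j <;>
    simp [epsAlphaBeta, Jmat, mul_apply, vecMul, dotProduct, Fin.sum_univ_succ]

lemma epsAlphaBeta_mul_eps_mul_epsAlphaBeta (x c : k) :
    epsAlphaBeta x * eps k c * epsAlphaBeta x = eps k (c + x ^ 2) := by
  rw [(commute_epsAlphaBeta_eps x c).eq, mul_assoc, epsAlphaBeta_mul_self, eps_add]

end

/-- For every `a b : k` the pairs `((ε a, σ), (ε 1, 1))` and `((ε b, σ), (ε 1, 1))` are conjugate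
in `G = SL₃(k) ⋊ ⟨σ⟩`: the restrictions `ρₐ|_{Γ₂}` are pairwise conjugate. -/
theorem stmt_1 (k : Type*) [Field k] [IsAlgClosed k] [CharP k 2] (a b : k) :
    ∃ g : Ghat k,
      g * ⟨eps k a, sigEl k⟩ * g⁻¹ = ⟨eps k b, sigEl k⟩ ∧
      g * ⟨eps k 1, 1⟩ * g⁻¹ = ⟨eps k 1, 1⟩ := by
  obtain ⟨x, hx⟩ := IsAlgClosed.exists_pow_nat_eq (a + b) two_pos
  refine ⟨SemidirectProduct.inl (epsAlphaBeta x), ?_, ?_⟩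
  all_goals rw [SemidirectProduct.inl_mul_mk_mul_inl_inv]; congr 1
  · change epsAlphaBeta x * eps k a * sigmaAut k (epsAlphaBeta x)⁻¹ = eps k b
    rw [sigmaAut_inv_epsAlphaBeta, epsAlphaBeta_mul_eps_mul_epsAlphaBeta, hx,
      CharTwo.add_cancel_left]
  · rw [map_one, MulAut.one_apply, (commute_epsAlphaBeta_eps x 1).eq, mul_inv_cancel_right]
end

section
/- Let k be an algebraically closed field of characteristic 2 and b ∈ k with b³ = 1 and b ≠ 1. Let K ≤ GL₆(k) be the subgroup generated by the permutation matrices of (1 5)(4 6) and (1 4 5 6)(2 3) together with the diagonal matrix diag(b, b⁻¹, 1, 1, 1, 1). Then the natural 6-dimensional module k⁶ is a semisimple K-module: every K-invariant subspace of k⁶ admits a K-invariant direct complement. -/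
/-!
Since `b⁻¹ = b ^ 2`, the third generator is `diag (b ^ w)` with `w = (1, 2, 0, 0, 0, 0)`. Its
conjugates `diag (b ^ (w ∘ τ ^ m))` by powers of the second generator `τ` lie in `K`, and as `b`
has order `3` their characters separate the six coordinates. Lagrange interpolation then puts every
coordinate projection in the algebra of diagonal matrices preserving a `K`-invariant subspace `p`,
so `p` is the span of the coordinate vectors it contains. The span of the other coordinate vectors
is a complement, and it is `K`-invariant because `K` is generated by monomial matrices: a
permutation that preserves a set of coordinates preserves its complement.
-/

open Matrix

/-- The invertible permutation matrix associated to a permutation, as an element of `GL n k`. -/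
noncomputable def permGL (k : Type*) [Field k] {n : Type*} [DecidableEq n] [Fintype n]
    (s : Equiv.Perm n) : Matrix.GeneralLinearGroup n k :=
  Matrix.GeneralLinearGroup.mkOfDetNeZero (s.permMatrix k)
    (by
      rw [Matrix.det_permutation]
      rcases Int.units_eq_one_or (Equiv.Perm.sign s) with h | h <;> simp [h])

/-- The invertible diagonal matrix with nonzero diagonal entries `d`, as an element of `GL n k`. -/
noncomputable def diagGL (k : Type*) [Field k] {n : Type*} [DecidableEq n] [Fintype n]
    (d : n → k) (h : ∀ i, d i ≠ 0) : Matrix.GeneralLinearGroup n k :=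
  Matrix.GeneralLinearGroup.mkOfDetNeZero (Matrix.diagonal d)
    (by rw [Matrix.det_diagonal]; exact Finset.prod_ne_zero_iff.mpr fun i _ => h i)

section

variable {k : Type*} [Field k] {n : Type*}

variable (k) in
def supportedOn (S : Set n) : Submodule k (n → k) :=
  Submodule.pi Sᶜ fun _ => ⊥

theorem mem_supportedOn {S : Set n} {v : n → k} :
    v ∈ supportedOn k S ↔ ∀ i ∉ S, v i = 0 := by
  simp [supportedOn, Submodule.mem_pi]

theorem isCompl_supportedOn_compl (S : Set n) : IsCompl (supportedOn k S) (supportedOn k Sᶜ) := by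
  constructor
  · rw [Submodule.disjoint_def]
    intro v hS hSc
    funext i
    by_cases hi : i ∈ S
    · exact mem_supportedOn.mp hSc i (Set.notMem_compl_iff.mpr hi)
    · exact mem_supportedOn.mp hS i hi
  · rw [Submodule.codisjoint_iff_exists_add_eq]
    intro v
    refine ⟨S.indicator v, Sᶜ.indicator v, ?_, ?_, S.indicator_self_add_compl v⟩ <;>
      exact mem_supportedOn.mpr fun i hi => Set.indicator_of_notMem hi v

variable [Fintype n] [DecidableEq n]

theorem Submodule.mulVec_inv_mem {q : Submodule k (n → k)} {g : GL n k}
    (hg : ∀ v ∈ q, (g : Matrix n n k) *ᵥ v ∈ q) {v : n → k} (hv : v ∈ q) :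
    ((g⁻¹ : GL n k) : Matrix n n k) *ᵥ v ∈ q := by
  have hinv (w : n → k) :
      ((g⁻¹ : GL n k) : Matrix n n k) *ᵥ ((g : Matrix n n k) *ᵥ w) = w := by
    rw [mulVec_mulVec, ← Units.val_mul, inv_mul_cancel, Units.val_one, one_mulVec]
  have hinj : Function.Injective ((mulVecLin (g : Matrix n n k)).restrict hg) := by
    intro x y hxy
    have hgxy : (g : Matrix n n k) *ᵥ x = (g : Matrix n n k) *ᵥ y := congrArg Subtype.val hxy
    exact Subtype.ext <| by
      simpa only [hinv] using congrArg (((g⁻¹ : GL n k) : Matrix n n k) *ᵥ ·) hgxy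
  obtain ⟨⟨w, hw⟩, hwv⟩ := LinearMap.injective_iff_surjective.mp hinj ⟨v, hv⟩
  have hgw : (g : Matrix n n k) *ᵥ w = v := congrArg Subtype.val hwv
  rwa [← hgw, hinv]

def Submodule.glStabilizer (q : Submodule k (n → k)) : Subgroup (GL n k) where
  carrier := {g | ∀ v ∈ q, (g : Matrix n n k) *ᵥ v ∈ q}
  one_mem' v hv := by simpa using hv
  mul_mem' {g h} hg hh v hv := by
    simpa only [Units.val_mul, ← mulVec_mulVec] using hg _ (hh v hv)
  inv_mem' hg _ hv := q.mulVec_inv_mem hg hv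

def Submodule.mulStabilizer (p : Submodule k (n → k)) : Subalgebra k (n → k) where
  carrier := {d | ∀ v ∈ p, d * v ∈ p}
  mul_mem' {d e} hd he v hv := by
    rw [mul_assoc]
    exact hd _ (he v hv)
  add_mem' {d e} hd he v hv := by
    rw [add_mul]
    exact add_mem (hd v hv) (he v hv)
  algebraMap_mem' c v hv := by
    rw [Algebra.algebraMap_eq_smul_one, smul_mul_assoc, one_mul]
    exact p.smul_mem c hv

theorem Subalgebra.single_one_mem_of_separates {A : Subalgebra k (n → k)}
    (hA : ∀ i j, i ≠ j → ∃ d ∈ A, d i ≠ d j) (i : n) : Pi.single i 1 ∈ A := by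
  have : ∀ j, ∃ d ∈ A, j ≠ i → d i ≠ d j := fun j => by
    by_cases hj : j = i
    · exact ⟨1, A.one_mem, fun h => (h hj).elim⟩
    · obtain ⟨d, hdA, hd⟩ := hA i j (Ne.symm hj)
      exact ⟨d, hdA, fun _ => hd⟩
  choose d hdA hd using this
  -- the Lagrange factor for `j` is `1` at `i` and `0` at `j`
  have hprod : Pi.single i 1 = ∏ j ∈ Finset.univ.erase i,
      (d j i - d j j)⁻¹ • (d j - algebraMap k (n → k) (d j j)) := by
    funext l
    rw [Finset.prod_apply]
    by_cases hl : l = i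
    · subst hl
      refine (Pi.single_eq_same _ _).trans (Finset.prod_eq_one fun j hj => ?_).symm
      simp [inv_mul_cancel₀ (sub_ne_zero.mpr (hd j (Finset.ne_of_mem_erase hj)))]
    · refine (Pi.single_eq_of_ne hl _).trans (Finset.prod_eq_zero (i := l) ?_ (by simp)).symm
      simpa using hl
  rw [hprod]
  exact prod_mem fun j _ => A.smul_mem (A.sub_mem (hdA j) (A.algebraMap_mem _)) _

theorem exists_eq_supportedOn {p : Submodule k (n → k)}
    (h : ∀ i, Pi.single i 1 ∈ p.mulStabilizer) : ∃ S, p = supportedOn k S := by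
  have hsingle {v} (hv : v ∈ p) (i : n) : Pi.single i (v i) ∈ p := by
    simpa [← Pi.single_mul_left] using h i v hv
  refine ⟨{i | Pi.single i 1 ∈ p}, Submodule.ext fun v => ⟨fun hv => ?_, fun hv => ?_⟩⟩
  · refine mem_supportedOn.mpr fun i hi => ?_
    by_contra hvi
    exact hi (by simpa [← Pi.single_smul', hvi] using p.smul_mem (v i)⁻¹ (hsingle hv i))
  · rw [← Finset.univ_sum_single v]
    refine p.sum_mem fun i _ => ?_
    by_cases hi : Pi.single i 1 ∈ p
    · simpa [← Pi.single_smul'] using p.smul_mem (v i) hi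
    · simp [mem_supportedOn.mp hv i hi]

theorem permGL_mulVec (σ : Equiv.Perm n) (v : n → k) :
    (permGL k σ : Matrix n n k) *ᵥ v = v ∘ σ :=
  permMatrix_mulVec σ

theorem diagGL_mulVec (d : n → k) (hd : ∀ i, d i ≠ 0) (v : n → k) :
    (diagGL k d hd : Matrix n n k) *ᵥ v = d * v :=
  funext (mulVec_diagonal d v)

theorem diagGL_mem_glStabilizer_iff {p : Submodule k (n → k)} {d : n → k}
    {hd : ∀ i, d i ≠ 0} :
    diagGL k d hd ∈ p.glStabilizer ↔ d ∈ p.mulStabilizer := by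
  change (∀ v ∈ p, _ ∈ p) ↔ ∀ v ∈ p, d * v ∈ p
  simp only [diagGL_mulVec]

theorem diagGL_mem_glStabilizer_supportedOn (S : Set n) (d : n → k) (hd : ∀ i, d i ≠ 0) :
    diagGL k d hd ∈ (supportedOn k S).glStabilizer :=
  diagGL_mem_glStabilizer_iff.mpr fun v hv =>
    mem_supportedOn.mpr fun i hi => by simp [mem_supportedOn.mp hv i hi]

theorem permGL_mem_glStabilizer_supportedOn_iff {σ : Equiv.Perm n} {S : Set n} :
    permGL k σ ∈ (supportedOn k S).glStabilizer ↔ Set.MapsTo σ Sᶜ Sᶜ := by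
  refine ⟨fun hσ i hi => ?_, fun h v hv => ?_⟩
  · by_contra hσi
    have hsingle : Pi.single (σ i) (1 : k) ∈ supportedOn k S :=
      mem_supportedOn.mpr fun j hj => Pi.single_eq_of_ne (by rintro rfl; exact hσi hj) 1
    have := mem_supportedOn.mp (hσ _ hsingle) i hi
    rw [permGL_mulVec] at this
    simp at this
  · rw [permGL_mulVec, mem_supportedOn]
    exact fun i hi => mem_supportedOn.mp hv _ (h hi)

theorem permGL_mem_glStabilizer_supportedOn_compl {σ : Equiv.Perm n} {S : Set n}
    (hσ : permGL k σ ∈ (supportedOn k S).glStabilizer) :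
    permGL k σ ∈ (supportedOn k Sᶜ).glStabilizer := by
  rw [permGL_mem_glStabilizer_supportedOn_iff] at hσ ⊢
  have hbij := ((Set.toFinite Sᶜ).injOn_iff_bijOn_of_mapsTo hσ).mp σ.injective.injOn
  simpa using (hbij.compl σ.bijective).mapsTo

theorem comp_mem_mulStabilizer {p : Submodule k (n → k)} {σ : Equiv.Perm n} {d : n → k}
    (hσ : permGL k σ ∈ p.glStabilizer) (hd : d ∈ p.mulStabilizer) :
    d ∘ σ ∈ p.mulStabilizer := by
  intro v hv
  obtain ⟨u, hu, rfl⟩ : ∃ u ∈ p, u ∘ σ = v := by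
    refine ⟨_, inv_mem hσ v hv, ?_⟩
    rw [← permGL_mulVec, mulVec_mulVec, ← Units.val_mul, mul_inv_cancel, Units.val_one,
      one_mulVec]
  have := hσ _ (hd u hu)
  rwa [permGL_mulVec] at this

theorem comp_pow_mem_mulStabilizer {p : Submodule k (n → k)} {σ : Equiv.Perm n} {d : n → k}
    (hσ : permGL k σ ∈ p.glStabilizer) (hd : d ∈ p.mulStabilizer) (m : ℕ) :
    d ∘ ⇑(σ ^ m) ∈ p.mulStabilizer := by
  induction m with
  | zero => exact hd
  | succ m ih =>
    rw [pow_succ, Equiv.Perm.coe_mul, ← Function.comp_assoc]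
    exact comp_mem_mulStabilizer hσ ih

theorem separates_of_pow_weights {p : Submodule k (n → k)} {σ : Equiv.Perm n} {b : k}
    {w : n → ℕ} (hσ : permGL k σ ∈ p.glStabilizer) (hw : (b ^ w ·) ∈ p.mulStabilizer)
    (hw_lt : ∀ i, w i < orderOf b)
    (hw_sep : ∀ i j, i ≠ j → ∃ m : ℕ, w ((σ ^ m) i) ≠ w ((σ ^ m) j))
    (i j : n) (hij : i ≠ j) :
    ∃ d ∈ p.mulStabilizer, d i ≠ d j := by
  obtain ⟨m, hm⟩ := hw_sep i j hij
  exact ⟨_, comp_pow_mem_mulStabilizer hσ hw m,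
    fun h => hm (pow_injOn_Iio_orderOf (hw_lt _) (hw_lt _) h)⟩

end

/-- The natural 6-dimensional module `k⁶` for the subgroup `K ≤ GL₆(k)` generated by the
given permutation matrices and the diagonal matrix is semisimple: every K-invariant subspace has a K-invariant direct complement. -/
theorem stmt_3 (k : Type*) [Field k]
    (b : k) (hb3 : b ^ 3 = 1) (hb1 : b ≠ 1)
    (K : Subgroup (Matrix.GeneralLinearGroup (Fin 6) k))
    (hK : K = Subgroup.closure
      { permGL k (c[(0 : Fin 6), 4] * c[(3 : Fin 6), 5]),
        permGL k (c[(0 : Fin 6), 3, 4, 5] * c[(1 : Fin 6), 2]),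
        diagGL k ![b, b⁻¹, 1, 1, 1, 1] (by
          have hb0 : b ≠ 0 := fun h => by simp [h] at hb3
          intro i
          fin_cases i
          exacts [hb0, inv_ne_zero hb0, one_ne_zero, one_ne_zero, one_ne_zero, one_ne_zero]) })
    (p : Submodule k (Fin 6 → k))
    (hp : ∀ g ∈ K, ∀ v ∈ p, (g : Matrix (Fin 6) (Fin 6) k).mulVec v ∈ p) :
    ∃ q : Submodule k (Fin 6 → k),
      (∀ g ∈ K, ∀ v ∈ q, (g : Matrix (Fin 6) (Fin 6) k).mulVec v ∈ q) ∧ IsCompl p q := by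
  set σ : Equiv.Perm (Fin 6) := c[0, 4] * c[3, 5]
  set τ : Equiv.Perm (Fin 6) := c[0, 3, 4, 5] * c[1, 2] with hτ_def
  set w : Fin 6 → ℕ := ![1, 2, 0, 0, 0, 0] with hw_def
  have hKp : K ≤ p.glStabilizer := hp
  have hσ : permGL k σ ∈ p.glStabilizer :=
    hKp (hK ▸ Subgroup.subset_closure (Set.mem_insert _ _))
  have hτ : permGL k τ ∈ p.glStabilizer :=
    hKp (hK ▸ Subgroup.subset_closure (Set.mem_insert_of_mem _ (Set.mem_insert _ _)))
  have hw : (b ^ w ·) ∈ p.mulStabilizer := by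
    have ht := diagGL_mem_glStabilizer_iff.mp (hKp (hK ▸ Subgroup.subset_closure
      (Set.mem_insert_of_mem _ (Set.mem_insert_of_mem _ (Set.mem_singleton _)))))
    convert ht using 1
    have hb_inv : b⁻¹ = b ^ 2 := inv_eq_of_mul_eq_one_right (by rw [← pow_succ']; exact hb3)
    funext i
    fin_cases i <;> simp [w, hb_inv]
  have hw_sep : ∀ i j, i ≠ j → ∃ m < 4, w ((τ ^ m) i) ≠ w ((τ ^ m) j) := by
    rw [hτ_def, hw_def]
    decide
  have hw_lt : ∀ i, w i < orderOf b := by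
    rw [orderOf_eq_prime hb3 hb1, hw_def]
    decide
  obtain ⟨S, rfl⟩ := exists_eq_supportedOn <| Subalgebra.single_one_mem_of_separates <|
    separates_of_pow_weights hτ hw hw_lt fun i j hij => (hw_sep i j hij).imp fun _ => And.right
  refine ⟨supportedOn k Sᶜ, ?_, isCompl_supportedOn_compl S⟩
  suffices K ≤ (supportedOn k Sᶜ).glStabilizer from this
  rw [hK, Subgroup.closure_le]
  rintro g (rfl | rfl | rfl)
  · exact permGL_mem_glStabilizer_supportedOn_compl hσ
  · exact permGL_mem_glStabilizer_supportedOn_compl hτ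
  · exact diagGL_mem_glStabilizer_supportedOn _ _ _
end

section
/- Let k be an algebraically closed field of characteristic 2 and b ∈ k with b³ = 1 and b ≠ 1. Let K ≤ GL₆(k) be the subgroup generated by the permutation matrices of (4 6), (1 4)(2 3)(5 6) and (1 5)(4 6) together with the diagonal matrix diag(b, b⁻¹, 1, 1, 1, 1). Then the natural 6-dimensional module k⁶ is a semisimple K-module: every K-invariant subspace of k⁶ admits a K-invariant direct complement. -/
open Matrix

lemma permGL_coe {k : Type*} [Field k] (σ : Equiv.Perm (Fin 6)) :
    ((permGL k σ : Matrix (Fin 6) (Fin 6) k)) = σ.permMatrix k := rfl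

lemma diagGL_coe {k : Type*} [Field k] (d : Fin 6 → k) (h : ∀ i, d i ≠ 0) :
    ((diagGL k d h : Matrix (Fin 6) (Fin 6) k)) = Matrix.diagonal d := rfl

lemma mulVec_perm {k : Type*} [Field k] (σ : Equiv.Perm (Fin 6)) (v : Fin 6 → k) :
    (σ.permMatrix k).mulVec v = fun i => v (σ i) := by
  funext i
  simp [Matrix.mulVec, dotProduct, Equiv.Perm.permMatrix, PEquiv.toMatrix,
    Equiv.toPEquiv_apply]

lemma mulVec_diag {k : Type*} [Field k] (d : Fin 6 → k) (v : Fin 6 → k) :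
    (Matrix.diagonal d).mulVec v = fun i => d i * v i := by
  funext i
  rw [Matrix.mulVec_diagonal]

lemma permGL_sq {k : Type*} [Field k] (σ : Equiv.Perm (Fin 6)) (h : σ * σ = 1) :
    permGL k σ * permGL k σ = 1 := by
  apply Units.ext
  show (σ.permMatrix k) * (σ.permMatrix k) = 1
  rw [Equiv.Perm.permMatrix, ← PEquiv.toMatrix_trans, ← Equiv.toPEquiv_trans]
  rw [show σ.trans σ = σ * σ from rfl, h]
  simp [Equiv.toPEquiv_refl, Equiv.Perm.one_def]

lemma diagGL_cube {k : Type*} [Field k] (d : Fin 6 → k) (h : ∀ i, d i ≠ 0)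
    (h3 : ∀ i, d i ^ 3 = 1) : diagGL k d h * (diagGL k d h * diagGL k d h) = 1 := by
  apply Units.ext
  show Matrix.diagonal d * (Matrix.diagonal d * Matrix.diagonal d) = 1
  rw [Matrix.diagonal_mul_diagonal, Matrix.diagonal_mul_diagonal, ← Matrix.diagonal_one]
  have hfun : (fun i => d i * (d i * d i)) = fun _ => (1 : k) :=
    funext fun i => by rw [← h3 i]; ring
  rw [hfun]

set_option maxHeartbeats 1600000 in
/-- The natural 6-dimensional module `k⁶` for the subgroup `K ≤ GL₆(k)` generated by the
given permutation matrices and the diagonal matrix is semisimple: every K-invariant subspace has a K-invariant direct complement. -/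
theorem stmt_4 (k : Type*) [Field k] [IsAlgClosed k] [CharP k 2]
    (b : k) (hb3 : b ^ 3 = 1) (hb1 : b ≠ 1)
    (K : Subgroup (Matrix.GeneralLinearGroup (Fin 6) k))
    (hK : K = Subgroup.closure
      { permGL k (c[(3 : Fin 6), 5]),
        permGL k (c[(0 : Fin 6), 3] * c[(1 : Fin 6), 2] * c[(4 : Fin 6), 5]),
        permGL k (c[(0 : Fin 6), 4] * c[(3 : Fin 6), 5]),
        diagGL k ![b, b⁻¹, 1, 1, 1, 1] (by
          have hb0 : b ≠ 0 := fun h => by simp [h] at hb3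
          intro i
          fin_cases i
          exacts [hb0, inv_ne_zero hb0, one_ne_zero, one_ne_zero, one_ne_zero, one_ne_zero]) })
    (p : Submodule k (Fin 6 → k))
    (hp : ∀ g ∈ K, ∀ v ∈ p, (g : Matrix (Fin 6) (Fin 6) k).mulVec v ∈ p) :
    ∃ q : Submodule k (Fin 6 → k),
      (∀ g ∈ K, ∀ v ∈ q, (g : Matrix (Fin 6) (Fin 6) k).mulVec v ∈ q) ∧ IsCompl p q := by
  classical
  -- scalar arithmetic
  have h2 : (2 : k) = 0 := by exact_mod_cast (CharP.cast_eq_zero k 2)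
  have hb0 : b ≠ 0 := fun h => by simp [h] at hb3
  have hbb : b ^ 2 + b + 1 = 0 := by
    have hfac : (b - 1) * (b ^ 2 + b + 1) = 0 := by linear_combination hb3
    rcases mul_eq_zero.mp hfac with h' | h'
    · exact absurd (sub_eq_zero.mp h') hb1
    · exact h'
  have hbinv : b⁻¹ = b ^ 2 := inv_eq_of_mul_eq_one_right (by linear_combination hb3)
  have hf_b : b * (b * b) + b ^ 2 * b + 1 = 1 := by linear_combination b ^ 3 * h2
  have hf_binv : b * (b⁻¹ * b⁻¹) + b ^ 2 * b⁻¹ + 1 = 0 := by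
    rw [hbinv]; linear_combination (b ^ 3 - b + 1) * hbb
  have hf_one : b * ((1 : k) * 1) + b ^ 2 * 1 + 1 = 0 := by linear_combination hbb
  have hg_b : b ^ 2 * (b * b) + b * b + 1 = 0 := by linear_combination (b ^ 2 - b + 1) * hbb
  have hg_binv : b ^ 2 * (b⁻¹ * b⁻¹) + b * b⁻¹ + 1 = 1 := by
    rw [hbinv]; linear_combination ((b - 1) * (b ^ 3 + 2)) * hbb + h2
  have hg_one : b ^ 2 * ((1 : k) * 1) + b * 1 + 1 = 0 := by linear_combination hbb
  -- the permutations and the diagonal vector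
  set σ1 : Equiv.Perm (Fin 6) := c[(3 : Fin 6), 5] with hσ1def
  set σ2 : Equiv.Perm (Fin 6) := c[(0 : Fin 6), 3] * c[(1 : Fin 6), 2] * c[(4 : Fin 6), 5]
    with hσ2def
  set σ3 : Equiv.Perm (Fin 6) := c[(0 : Fin 6), 4] * c[(3 : Fin 6), 5] with hσ3def
  set dv : Fin 6 → k := ![b, b⁻¹, 1, 1, 1, 1] with hdvdef
  have hdv0 : ∀ i, dv i ≠ 0 := by
    intro i
    fin_cases i
    exacts [hb0, inv_ne_zero hb0, one_ne_zero, one_ne_zero, one_ne_zero, one_ne_zero]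
  have hσ1sq : σ1 * σ1 = 1 := by decide
  have hσ2sq : σ2 * σ2 = 1 := by decide
  have hσ3sq : σ3 * σ3 = 1 := by decide
  have hσ1inv : ∀ x, σ1 (σ1 x) = x := by decide
  have hσ2inv : ∀ x, σ2 (σ2 x) = x := by decide
  have hσ3inv : ∀ x, σ3 (σ3 x) = x := by decide
  -- membership of the generators
  have hg1K : permGL k σ1 ∈ K := by rw [hK]; exact Subgroup.subset_closure (by left; rfl)
  have hg2K : permGL k σ2 ∈ K := by
    rw [hK]; exact Subgroup.subset_closure (by right; left; rfl)
  have hg3K : permGL k σ3 ∈ K := by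
    rw [hK]; exact Subgroup.subset_closure (by right; right; left; rfl)
  have hg4K : diagGL k dv hdv0 ∈ K := by
    rw [hK]; exact Subgroup.subset_closure (by right; right; right; rfl)
  -- actions preserve p
  have hperm : ∀ σ : Equiv.Perm (Fin 6), permGL k σ ∈ K → ∀ v ∈ p, (fun i => v (σ i)) ∈ p := by
    intro σ hσ v hv
    have h := hp _ hσ v hv
    rwa [permGL_coe, mulVec_perm] at h
  have hD : ∀ v ∈ p, (fun i => dv i * v i) ∈ p := by
    intro v hv
    have h := hp _ hg4K v hv
    rwa [diagGL_coe, mulVec_diag] at h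
  -- conjugated torus actions
  have hT2 : ∀ v ∈ p, (fun i => dv (σ2 i) * v i) ∈ p := by
    intro v hv
    have h := hperm σ2 hg2K _ (hD _ (hperm σ2 hg2K v hv))
    simp only [hσ2inv] at h
    exact h
  have hT3 : ∀ v ∈ p, (fun i => dv (σ3 i) * v i) ∈ p := by
    intro v hv
    have h := hperm σ3 hg3K _ (hD _ (hperm σ3 hg3K v hv))
    simp only [hσ3inv] at h
    exact h
  -- the generic quadratic combination
  have key : ∀ (c : Fin 6 → k), (∀ v ∈ p, (fun i => c i * v i) ∈ p) →
      ∀ (a a' : k), ∀ v ∈ p, (fun i => a * (c i * (c i * v i)) + a' * (c i * v i) + v i) ∈ p := by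
    intro c hc a a' v hv
    exact p.add_mem (p.add_mem (p.smul_mem a (hc _ (hc v hv))) (p.smul_mem a' (hc v hv))) hv
  -- coordinate values of the torus vectors
  obtain ⟨e0, e1, e2, e3, e4, e5⟩ :
      dv 0 = b ∧ dv 1 = b⁻¹ ∧ dv 2 = 1 ∧ dv 3 = 1 ∧ dv 4 = 1 ∧ dv 5 = 1 :=
    ⟨rfl, rfl, rfl, rfl, rfl, rfl⟩
  -- extraction of single coordinates
  have hsingle : ∀ v ∈ p, ∀ i : Fin 6, Pi.single i (v i) ∈ p := by
    intro v hv
    have h0 : Pi.single (0 : Fin 6) (v 0) ∈ p := by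
      have h := key dv hD b (b ^ 2) v hv
      have e : (fun i => b * (dv i * (dv i * v i)) + b ^ 2 * (dv i * v i) + v i)
          = Pi.single (0 : Fin 6) (v 0) := by
        funext i
        fin_cases i <;>
          simp [e0, e1, e2, e3, e4, e5, Pi.single_apply] <;>
          first
            | linear_combination (v 0) * hf_b
            | linear_combination (v 1) * hf_binv
            | linear_combination (v 2) * hf_one
            | linear_combination (v 3) * hf_one
            | linear_combination (v 4) * hf_one
            | linear_combination (v 5) * hf_one
      rwa [e] at h
    have h1 : Pi.single (1 : Fin 6) (v 1) ∈ p := by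
      have h := key dv hD (b ^ 2) b v hv
      have e : (fun i => b ^ 2 * (dv i * (dv i * v i)) + b * (dv i * v i) + v i)
          = Pi.single (1 : Fin 6) (v 1) := by
        funext i
        fin_cases i <;>
          simp [e0, e1, e2, e3, e4, e5, Pi.single_apply] <;>
          first
            | linear_combination (v 0) * hg_b
            | linear_combination (v 1) * hg_binv
            | linear_combination (v 2) * hg_one
            | linear_combination (v 3) * hg_one
            | linear_combination (v 4) * hg_one
            | linear_combination (v 5) * hg_one
      rwa [e] at h
    obtain ⟨s0, s1, s2, s3, s4, s5⟩ :
        σ2 0 = 3 ∧ σ2 1 = 2 ∧ σ2 2 = 1 ∧ σ2 3 = 0 ∧ σ2 4 = 5 ∧ σ2 5 = 4 := by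
      refine ⟨?_, ?_, ?_, ?_, ?_, ?_⟩ <;> decide
    obtain ⟨t0, t1, t2, t3, t4, t5⟩ :
        σ3 0 = 4 ∧ σ3 1 = 1 ∧ σ3 2 = 2 ∧ σ3 3 = 5 ∧ σ3 4 = 0 ∧ σ3 5 = 3 := by
      refine ⟨?_, ?_, ?_, ?_, ?_, ?_⟩ <;> decide
    have h3 : Pi.single (3 : Fin 6) (v 3) ∈ p := by
      have h := key (fun i => dv (σ2 i)) hT2 b (b ^ 2) v hv
      have e : (fun i => b * (dv (σ2 i) * (dv (σ2 i) * v i)) + b ^ 2 * (dv (σ2 i) * v i) + v i)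
          = Pi.single (3 : Fin 6) (v 3) := by
        funext i
        fin_cases i <;>
          simp [s0, s1, s2, s3, s4, s5, e0, e1, e2, e3, e4, e5, Pi.single_apply] <;>
          first
            | linear_combination (v 3) * hf_b
            | linear_combination (v 2) * hf_binv
            | linear_combination (v 0) * hf_one
            | linear_combination (v 1) * hf_one
            | linear_combination (v 4) * hf_one
            | linear_combination (v 5) * hf_one
      rwa [e] at h
    have h2' : Pi.single (2 : Fin 6) (v 2) ∈ p := by
      have h := key (fun i => dv (σ2 i)) hT2 (b ^ 2) b v hv
      have e : (fun i => b ^ 2 * (dv (σ2 i) * (dv (σ2 i) * v i)) + b * (dv (σ2 i) * v i) + v i)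
          = Pi.single (2 : Fin 6) (v 2) := by
        funext i
        fin_cases i <;>
          simp [s0, s1, s2, s3, s4, s5, e0, e1, e2, e3, e4, e5, Pi.single_apply] <;>
          first
            | linear_combination (v 2) * hg_binv
            | linear_combination (v 3) * hg_b
            | linear_combination (v 0) * hg_one
            | linear_combination (v 1) * hg_one
            | linear_combination (v 4) * hg_one
            | linear_combination (v 5) * hg_one
      rwa [e] at h
    have h4' : Pi.single (4 : Fin 6) (v 4) ∈ p := by
      have h := key (fun i => dv (σ3 i)) hT3 b (b ^ 2) v hv
      have e : (fun i => b * (dv (σ3 i) * (dv (σ3 i) * v i)) + b ^ 2 * (dv (σ3 i) * v i) + v i)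
          = Pi.single (4 : Fin 6) (v 4) := by
        funext i
        fin_cases i <;>
          simp [t0, t1, t2, t3, t4, t5, e0, e1, e2, e3, e4, e5, Pi.single_apply] <;>
          first
            | linear_combination (v 4) * hf_b
            | linear_combination (v 1) * hf_binv
            | linear_combination (v 0) * hf_one
            | linear_combination (v 2) * hf_one
            | linear_combination (v 3) * hf_one
            | linear_combination (v 5) * hf_one
      rwa [e] at h
    have h5 : Pi.single (5 : Fin 6) (v 5) ∈ p := by
      have h := p.sub_mem (p.sub_mem (p.sub_mem (p.sub_mem (p.sub_mem hv h0) h1) h2') h3) h4'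
      have e : v - Pi.single (0 : Fin 6) (v 0) - Pi.single 1 (v 1) - Pi.single 2 (v 2)
          - Pi.single 3 (v 3) - Pi.single 4 (v 4) = Pi.single (5 : Fin 6) (v 5) := by
        funext i
        fin_cases i <;> simp [Pi.single_apply]
      rwa [e] at h
    intro i
    fin_cases i
    exacts [h0, h1, h2', h3, h4', h5]
  -- the support set
  set S : Set (Fin 6) := {i | Pi.single i (1 : k) ∈ p} with hSdef
  have hscale : ∀ (i : Fin 6) (c : k), c ≠ 0 → Pi.single i c ∈ p → i ∈ S := by
    intro i c hc hm
    have h := p.smul_mem c⁻¹ hm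
    have e : c⁻¹ • (Pi.single i c : Fin 6 → k) = Pi.single i (1 : k) := by
      funext j
      by_cases hj : j = i
      · subst hj; simp [inv_mul_cancel₀ hc]
      · simp [Pi.single_apply, hj]
    rw [e] at h
    exact h
  have hpmem : ∀ v, v ∈ p ↔ ∀ i ∉ S, v i = 0 := by
    intro v
    constructor
    · intro hv i hiS
      by_contra hne
      exact hiS (hscale i (v i) hne (hsingle v hv i))
    · intro hv
      have e : v = ∑ i : Fin 6, Pi.single i (v i) := (Finset.univ_sum_single v).symm
      rw [e]
      refine Submodule.sum_mem p ?_
      intro i _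
      by_cases hi : i ∈ S
      · have e2 : (Pi.single i (v i) : Fin 6 → k) = v i • (Pi.single i (1 : k) : Fin 6 → k) := by
          funext j
          by_cases hj : j = i
          · subst hj; simp
          · simp [Pi.single_apply, hj]
        rw [e2]
        exact p.smul_mem _ hi
      · rw [hv i hi]
        simp
  -- stability of S under the permutations
  have hstab : ∀ σ : Equiv.Perm (Fin 6), permGL k σ ∈ K → (∀ x, σ (σ x) = x) →
      ∀ i ∈ S, σ i ∈ S := by
    intro σ hσK hinv i hi
    have h := hperm σ hσK _ hi
    have e : (fun j => (Pi.single i (1 : k) : Fin 6 → k) (σ j)) = (Pi.single (σ i) (1 : k) : Fin 6 → k) := by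
      funext j
      by_cases hj : j = σ i
      · subst hj; rw [hinv]; simp
      · have : σ j ≠ i := fun hc => hj (by rw [← hc, hinv])
        simp [Pi.single_apply, hj, this]
    rw [e] at h
    exact h
  -- the complement
  let q : Submodule k (Fin 6 → k) :=
    { carrier := {v | ∀ i ∈ S, v i = 0}
      add_mem' := fun ha hb i hi => by simp only [Pi.add_apply, ha i hi, hb i hi, add_zero]
      zero_mem' := fun i _ => rfl
      smul_mem' := fun c v hv i hi => by simp only [Pi.smul_apply, hv i hi, smul_zero] }
  have hqmem : ∀ v, v ∈ q ↔ ∀ i ∈ S, v i = 0 := fun v => Iff.rfl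
  -- invariance of q
  have hqdiag : ∀ (d : Fin 6 → k), ∀ v ∈ q, (Matrix.diagonal d).mulVec v ∈ q := by
    intro d v hv
    rw [mulVec_diag]
    intro i hi
    simp [(hqmem v).mp hv i hi]
  have hqperm : ∀ σ : Equiv.Perm (Fin 6), (∀ i ∈ S, σ i ∈ S) →
      ∀ v ∈ q, (σ.permMatrix k).mulVec v ∈ q := by
    intro σ hσS v hv
    rw [mulVec_perm]
    intro i hi
    exact (hqmem v).mp hv (σ i) (hσS i hi)
  have hqK : ∀ g ∈ K, ∀ v ∈ q, (g : Matrix (Fin 6) (Fin 6) k).mulVec v ∈ q := by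
    let H : Subgroup (Matrix.GeneralLinearGroup (Fin 6) k) :=
      { carrier := {g | (∀ v ∈ q, (g : Matrix (Fin 6) (Fin 6) k).mulVec v ∈ q) ∧
          (∀ v ∈ q, ((g⁻¹ : Matrix.GeneralLinearGroup (Fin 6) k) :
            Matrix (Fin 6) (Fin 6) k).mulVec v ∈ q)}
        one_mem' := by
          constructor <;> intro v hv <;>
            simp only [inv_one, Units.val_one, Matrix.one_mulVec] <;> exact hv
        mul_mem' := by
          rintro g h ⟨hg1, hg2⟩ ⟨hh1, hh2⟩
          constructor
          · intro v hv
            rw [Units.val_mul, ← Matrix.mulVec_mulVec]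
            exact hg1 _ (hh1 v hv)
          · intro v hv
            rw [_root_.mul_inv_rev, Units.val_mul, ← Matrix.mulVec_mulVec]
            exact hh2 _ (hg2 v hv)
        inv_mem' := by
          rintro g ⟨hg1, hg2⟩
          refine ⟨hg2, ?_⟩
          rw [inv_inv]
          exact hg1 }
    have hle : K ≤ H := by
      rw [hK, Subgroup.closure_le]
      rintro g hg
      simp only [Set.mem_insert_iff, Set.mem_singleton_iff] at hg
      have hpermH : ∀ σ : Equiv.Perm (Fin 6), σ * σ = 1 → (∀ i ∈ S, σ i ∈ S) →
          permGL k σ ∈ H := by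
        intro σ hsq hσS
        have hinv : (permGL k σ)⁻¹ = permGL k σ := inv_eq_of_mul_eq_one_right (permGL_sq σ hsq)
        constructor
        · intro v hv
          rw [permGL_coe]
          exact hqperm σ hσS v hv
        · intro v hv
          rw [hinv, permGL_coe]
          exact hqperm σ hσS v hv
      rcases hg with rfl | rfl | rfl | rfl
      · exact hpermH σ1 hσ1sq (hstab σ1 hg1K hσ1inv)
      · exact hpermH σ2 hσ2sq (hstab σ2 hg2K hσ2inv)
      · exact hpermH σ3 hσ3sq (hstab σ3 hg3K hσ3inv)
      · have hcube : ∀ i, dv i ^ 3 = 1 := by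
          intro i
          fin_cases i
          · exact hb3
          · show b⁻¹ ^ 3 = 1
            rw [hbinv]
            linear_combination (b ^ 3 + 1) * hb3
          all_goals { show (1:k) ^ 3 = 1; norm_num }
        have hinv : (diagGL k dv hdv0)⁻¹ = diagGL k dv hdv0 * diagGL k dv hdv0 :=
          inv_eq_of_mul_eq_one_right (diagGL_cube dv hdv0 hcube)
        constructor
        · intro v hv
          rw [diagGL_coe]
          exact hqdiag dv v hv
        · intro v hv
          rw [hinv, Units.val_mul, diagGL_coe, Matrix.diagonal_mul_diagonal]
          exact hqdiag _ v hv
    exact fun g hg => (hle hg).1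
  refine ⟨q, hqK, ?_, ?_⟩
  · -- disjoint
    rw [Submodule.disjoint_def]
    intro v hvp hvq
    funext i
    by_cases hi : i ∈ S
    · exact (hqmem v).mp hvq i hi
    · exact (hpmem v).mp hvp i hi
  · -- codisjoint
    rw [codisjoint_iff_le_sup]
    intro v _
    rw [Submodule.mem_sup]
    refine ⟨fun i => if i ∈ S then v i else 0, ?_, fun i => if i ∈ S then 0 else v i, ?_, ?_⟩
    · rw [hpmem]
      intro i hi
      simp [hi]
    · rw [hqmem]
      intro i hi
      simp [hi]
    · funext i
      by_cases hi : i ∈ S <;> simp [hi]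
end

section
/- Let k be an algebraically closed field of characteristic 2 and b ∈ k with b³ = 1 and b ≠ 1. Let K ≤ GL₆(k) be the subgroup generated by the permutation matrices of (1 4)(2 3)(5 6), (1 3 5)(2 4 6) and (2 4 6) together with the diagonal matrix diag(b, 1, b⁻¹, 1, 1, 1). Then the natural 6-dimensional module k⁶ is a semisimple K-module: every K-invariant subspace of k⁶ admits a K-invariant direct complement. -/
open Matrix

lemma permGL_mulVec_s5 (k : Type*) [Field k] (s : Equiv.Perm (Fin 6)) (v : Fin 6 → k) :
    ((permGL k s : Matrix.GeneralLinearGroup (Fin 6) k) : Matrix (Fin 6) (Fin 6) k).mulVec v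
      = v ∘ s := by
  show (s.permMatrix k).mulVec v = v ∘ s
  funext i
  simp [Equiv.Perm.permMatrix, Matrix.mulVec, dotProduct,
    PEquiv.toMatrix_apply, Equiv.toPEquiv_apply]

lemma diagGL_mulVec_s5 (k : Type*) [Field k] (d : Fin 6 → k) (h : ∀ i, d i ≠ 0) (v : Fin 6 → k) :
    ((diagGL k d h : Matrix.GeneralLinearGroup (Fin 6) k) : Matrix (Fin 6) (Fin 6) k).mulVec v
      = fun i => d i * v i := by
  show (Matrix.diagonal d).mulVec v = _
  funext i
  simp [Matrix.mulVec_diagonal]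

lemma comp_single (k : Type*) [Field k] (s : Equiv.Perm (Fin 6)) (j : Fin 6) (a : k) :
    (Pi.single j a) ∘ s = Pi.single (s⁻¹ j) a := by
  funext x
  simp only [Function.comp_apply, Pi.single_apply]
  congr 1
  apply propext
  constructor
  · intro h; subst h; simp
  · intro h; subst h; simp

lemma cons_val_five {α : Type*} {m : ℕ} (x : α) (u : Fin (m + 5) → α) :
    Matrix.vecCons x u 5
      = Matrix.vecHead (Matrix.vecTail (Matrix.vecTail (Matrix.vecTail (Matrix.vecTail u)))) :=
  rfl

/-- The natural 6-dimensional module `k⁶` for the subgroup `K ≤ GL₆(k)` generated by the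
given permutation matrices and the diagonal matrix is semisimple: every K-invariant subspace has a K-invariant direct complement. -/
theorem stmt_5 (k : Type*) [Field k] [IsAlgClosed k] [CharP k 2]
    (b : k) (hb3 : b ^ 3 = 1) (hb1 : b ≠ 1)
    (K : Subgroup (Matrix.GeneralLinearGroup (Fin 6) k))
    (hK : K = Subgroup.closure
      { permGL k (c[(0 : Fin 6), 3] * c[(1 : Fin 6), 2] * c[(4 : Fin 6), 5]),
        permGL k (c[(0 : Fin 6), 2, 4] * c[(1 : Fin 6), 3, 5]),
        permGL k (c[(1 : Fin 6), 3, 5]),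
        diagGL k ![b, 1, b⁻¹, 1, 1, 1] (by
          have hb0 : b ≠ 0 := fun h => by simp [h] at hb3
          intro i
          fin_cases i
          exacts [hb0, one_ne_zero, inv_ne_zero hb0, one_ne_zero, one_ne_zero, one_ne_zero]) })
    (p : Submodule k (Fin 6 → k))
    (hp : ∀ g ∈ K, ∀ v ∈ p, (g : Matrix (Fin 6) (Fin 6) k).mulVec v ∈ p) :
    ∃ q : Submodule k (Fin 6 → k),
      (∀ g ∈ K, ∀ v ∈ q, (g : Matrix (Fin 6) (Fin 6) k).mulVec v ∈ q) ∧ IsCompl p q := by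
  have h2 : (2 : k) = 0 := by exact_mod_cast (CharP.cast_eq_zero k 2)
  have hb0 : b ≠ 0 := fun h => by simp [h] at hb3
  have hbi : b⁻¹ = b ^ 2 := inv_eq_of_mul_eq_one_right (by linear_combination hb3)
  have hsum : 1 + b + b ^ 2 = 0 := by
    have h : (b - 1) * (1 + b + b ^ 2) = 0 := by linear_combination hb3
    rcases mul_eq_zero.mp h with h' | h'
    · exact absurd (sub_eq_zero.mp h') hb1
    · exact h'
  have hne : ∀ i, (![b, 1, b⁻¹, 1, 1, 1] : Fin 6 → k) i ≠ 0 := by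
    intro i
    fin_cases i
    exacts [hb0, one_ne_zero, inv_ne_zero hb0, one_ne_zero, one_ne_zero, one_ne_zero]
  -- actions of the generators
  have A1 : ∀ v ∈ p, v ∘ (c[(0 : Fin 6), 3] * c[(1 : Fin 6), 2] * c[(4 : Fin 6), 5]) ∈ p := by
    intro v hv
    have h := hp _ (by rw [hK]; exact Subgroup.subset_closure (Set.mem_insert _ _)) v hv
    rwa [permGL_mulVec_s5] at h
  have A2 : ∀ v ∈ p, v ∘ (c[(0 : Fin 6), 2, 4] * c[(1 : Fin 6), 3, 5]) ∈ p := by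
    intro v hv
    have h := hp _ (by
      rw [hK]
      exact Subgroup.subset_closure (Set.mem_insert_of_mem _ (Set.mem_insert _ _))) v hv
    rwa [permGL_mulVec_s5] at h
  have D0 : ∀ v ∈ p, (fun i => (![b, 1, b⁻¹, 1, 1, 1] : Fin 6 → k) i * v i) ∈ p := by
    intro v hv
    rw [← diagGL_mulVec_s5 k ![b, 1, b⁻¹, 1, 1, 1] hne]
    exact hp _ (by
      rw [hK]
      exact Subgroup.subset_closure
        (Set.mem_insert_of_mem _ (Set.mem_insert_of_mem _ (Set.mem_insert_of_mem _ rfl)))) v hv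
  have C1 : ∀ v ∈ p, (fun i => (![b, 1, b ^ 2, 1, 1, 1] : Fin 6 → k) i * v i) ∈ p := by
    simpa only [hbi] using D0
  -- permutation value tables
  have t1 : ∀ j : Fin 6,
      (c[(0 : Fin 6), 3] * c[(1 : Fin 6), 2] * c[(4 : Fin 6), 5]) j = ![3, 2, 1, 0, 5, 4] j := by
    decide
  have t2 : ∀ j : Fin 6,
      (c[(0 : Fin 6), 2, 4] * c[(1 : Fin 6), 3, 5]) j = ![2, 3, 4, 5, 0, 1] j := by
    decide
  have tinv1 : ∀ j : Fin 6,
      (c[(0 : Fin 6), 3] * c[(1 : Fin 6), 2] * c[(4 : Fin 6), 5])⁻¹ j = ![3, 2, 1, 0, 5, 4] j := by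
    decide
  have tinv2 : ∀ j : Fin 6,
      (c[(0 : Fin 6), 2, 4] * c[(1 : Fin 6), 3, 5])⁻¹ j = ![4, 5, 0, 1, 2, 3] j := by
    decide
  -- conjugated diagonal actions
  have C2 : ∀ v ∈ p, (fun i => (![1, b ^ 2, 1, b, 1, 1] : Fin 6 → k) i * v i) ∈ p := by
    intro v hv
    have h := A1 _ (C1 _ (A1 v hv))
    have e : ((fun i => (![b, 1, b ^ 2, 1, 1, 1] : Fin 6 → k) i
          * (v ∘ (c[(0 : Fin 6), 3] * c[(1 : Fin 6), 2] * c[(4 : Fin 6), 5])) i)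
        ∘ (c[(0 : Fin 6), 3] * c[(1 : Fin 6), 2] * c[(4 : Fin 6), 5]))
        = fun i => (![1, b ^ 2, 1, b, 1, 1] : Fin 6 → k) i * v i := by
      funext j
      simp only [Function.comp_apply, t1]
      fin_cases j <;> simp [cons_val_five]
    rwa [e] at h
  have C3 : ∀ v ∈ p, (fun i => (![1, 1, b, 1, b ^ 2, 1] : Fin 6 → k) i * v i) ∈ p := by
    intro v hv
    have h := A2 _ (A2 _ (C1 _ (A2 v hv)))
    have e : (((fun i => (![b, 1, b ^ 2, 1, 1, 1] : Fin 6 → k) i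
          * (v ∘ (c[(0 : Fin 6), 2, 4] * c[(1 : Fin 6), 3, 5])) i)
        ∘ (c[(0 : Fin 6), 2, 4] * c[(1 : Fin 6), 3, 5]))
        ∘ (c[(0 : Fin 6), 2, 4] * c[(1 : Fin 6), 3, 5]))
        = fun i => (![1, 1, b, 1, b ^ 2, 1] : Fin 6 → k) i * v i := by
      funext j
      simp only [Function.comp_apply, t2]
      fin_cases j <;> simp [cons_val_five]
    rwa [e] at h
  have C4 : ∀ v ∈ p, (fun i => (![1, b, 1, 1, 1, b ^ 2] : Fin 6 → k) i * v i) ∈ p := by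
    intro v hv
    have h := A1 _ (C3 _ (A1 v hv))
    have e : ((fun i => (![1, 1, b, 1, b ^ 2, 1] : Fin 6 → k) i
          * (v ∘ (c[(0 : Fin 6), 3] * c[(1 : Fin 6), 2] * c[(4 : Fin 6), 5])) i)
        ∘ (c[(0 : Fin 6), 3] * c[(1 : Fin 6), 2] * c[(4 : Fin 6), 5]))
        = fun i => (![1, b, 1, 1, 1, b ^ 2] : Fin 6 → k) i * v i := by
      funext j
      simp only [Function.comp_apply, t1]
      fin_cases j <;> simp [cons_val_five]
    rwa [e] at h
  -- spectral projections (char 2, cube roots of unity)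
  have proj : ∀ (c : Fin 6 → k), (∀ v ∈ p, (fun i => c i * v i) ∈ p) →
      ∀ (lam : k), ∀ v ∈ p, (fun i => (1 + lam ^ 2 * c i + lam * c i ^ 2) * v i) ∈ p := by
    intro c hc lam v hv
    have h1 := hc v hv
    have h2' := hc _ h1
    have hmem := p.add_mem (p.add_mem hv (p.smul_mem (lam ^ 2) h1)) (p.smul_mem lam h2')
    convert hmem using 1
    funext i
    simp only [Pi.add_apply, Pi.smul_apply, smul_eq_mul]
    ring
  have key : ∀ (c : Fin 6 → k), (∀ v ∈ p, (fun i => c i * v i) ∈ p) →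
      ∀ (lam : k) (i0 : Fin 6),
      ((fun i => 1 + lam ^ 2 * c i + lam * c i ^ 2) = fun i => if i = i0 then 1 else 0) →
      ∀ v ∈ p, Pi.single i0 (v i0) ∈ p := by
    intro c hc lam i0 hco v hv
    have h := proj c hc lam v hv
    have e : (fun i => (1 + lam ^ 2 * c i + lam * c i ^ 2) * v i)
        = Pi.single i0 (v i0) := by
      funext i
      rw [congrFun hco i]
      by_cases h' : i = i0
      · subst h'; simp
      · simp [Pi.single_apply, h']
    rwa [e] at h
  -- the six coefficient computations
  have co0 : (fun i => 1 + b ^ 2 * (![b, 1, b ^ 2, 1, 1, 1] : Fin 6 → k) i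
      + b * (![b, 1, b ^ 2, 1, 1, 1] : Fin 6 → k) i ^ 2)
      = fun i => if i = (0 : Fin 6) then 1 else 0 := by
    funext i
    fin_cases i <;> simp [cons_val_five] <;>
      first
        | linear_combination b ^ 3 * h2
        | linear_combination b ^ 6 * h2
        | linear_combination hsum
        | linear_combination hsum + b * hb3
        | linear_combination hsum + (b + b ^ 2) * hb3
        | linear_combination -hsum
        | linear_combination -hsum - b * hb3
        | linear_combination -hsum - (b + b ^ 2) * hb3
  have co2 : (fun i => 1 + (b ^ 2) ^ 2 * (![b, 1, b ^ 2, 1, 1, 1] : Fin 6 → k) i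
      + b ^ 2 * (![b, 1, b ^ 2, 1, 1, 1] : Fin 6 → k) i ^ 2)
      = fun i => if i = (2 : Fin 6) then 1 else 0 := by
    funext i
    fin_cases i <;> simp [cons_val_five] <;>
      first
        | linear_combination b ^ 3 * h2
        | linear_combination b ^ 6 * h2
        | linear_combination hsum
        | linear_combination hsum + b * hb3
        | linear_combination hsum + (b + b ^ 2) * hb3
        | linear_combination -hsum
        | linear_combination -hsum - b * hb3
        | linear_combination -hsum - (b + b ^ 2) * hb3
  have co1 : (fun i => 1 + (b ^ 2) ^ 2 * (![1, b ^ 2, 1, b, 1, 1] : Fin 6 → k) i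
      + b ^ 2 * (![1, b ^ 2, 1, b, 1, 1] : Fin 6 → k) i ^ 2)
      = fun i => if i = (1 : Fin 6) then 1 else 0 := by
    funext i
    fin_cases i <;> simp [cons_val_five] <;>
      first
        | linear_combination b ^ 3 * h2
        | linear_combination b ^ 6 * h2
        | linear_combination hsum
        | linear_combination hsum + b * hb3
        | linear_combination hsum + (b + b ^ 2) * hb3
        | linear_combination -hsum
        | linear_combination -hsum - b * hb3
        | linear_combination -hsum - (b + b ^ 2) * hb3
  have co3 : (fun i => 1 + b ^ 2 * (![1, b ^ 2, 1, b, 1, 1] : Fin 6 → k) i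
      + b * (![1, b ^ 2, 1, b, 1, 1] : Fin 6 → k) i ^ 2)
      = fun i => if i = (3 : Fin 6) then 1 else 0 := by
    funext i
    fin_cases i <;> simp [cons_val_five] <;>
      first
        | linear_combination b ^ 3 * h2
        | linear_combination b ^ 6 * h2
        | linear_combination hsum
        | linear_combination hsum + b * hb3
        | linear_combination hsum + (b + b ^ 2) * hb3
        | linear_combination -hsum
        | linear_combination -hsum - b * hb3
        | linear_combination -hsum - (b + b ^ 2) * hb3
  have co4 : (fun i => 1 + (b ^ 2) ^ 2 * (![1, 1, b, 1, b ^ 2, 1] : Fin 6 → k) i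
      + b ^ 2 * (![1, 1, b, 1, b ^ 2, 1] : Fin 6 → k) i ^ 2)
      = fun i => if i = (4 : Fin 6) then 1 else 0 := by
    funext i
    fin_cases i <;> simp [cons_val_five] <;>
      first
        | linear_combination b ^ 3 * h2
        | linear_combination b ^ 6 * h2
        | linear_combination hsum
        | linear_combination hsum + b * hb3
        | linear_combination hsum + (b + b ^ 2) * hb3
        | linear_combination -hsum
        | linear_combination -hsum - b * hb3
        | linear_combination -hsum - (b + b ^ 2) * hb3
  have co5 : (fun i => 1 + (b ^ 2) ^ 2 * (![1, b, 1, 1, 1, b ^ 2] : Fin 6 → k) i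
      + b ^ 2 * (![1, b, 1, 1, 1, b ^ 2] : Fin 6 → k) i ^ 2)
      = fun i => if i = (5 : Fin 6) then 1 else 0 := by
    funext i
    fin_cases i <;> simp [cons_val_five] <;>
      first
        | linear_combination b ^ 3 * h2
        | linear_combination b ^ 6 * h2
        | linear_combination hsum
        | linear_combination hsum + b * hb3
        | linear_combination hsum + (b + b ^ 2) * hb3
        | linear_combination -hsum
        | linear_combination -hsum - b * hb3
        | linear_combination -hsum - (b + b ^ 2) * hb3
  -- all coordinate projections preserve p
  have hsgl : ∀ v ∈ p, ∀ i, Pi.single i (v i) ∈ p := by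
    intro v hv i
    fin_cases i
    · exact key _ C1 b 0 co0 v hv
    · exact key _ C2 (b ^ 2) 1 co1 v hv
    · exact key _ C1 (b ^ 2) 2 co2 v hv
    · exact key _ C2 b 3 co3 v hv
    · exact key _ C3 (b ^ 2) 4 co4 v hv
    · exact key _ C4 (b ^ 2) 5 co5 v hv
  -- moves by the permutations
  have M1 : ∀ i j : Fin 6, (![3, 2, 1, 0, 5, 4] : Fin 6 → Fin 6) i = j →
      Pi.single i (1 : k) ∈ p → Pi.single j (1 : k) ∈ p := by
    intro i j hij hi
    have h := A1 _ hi
    rwa [comp_single, tinv1, hij] at h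
  have M2 : ∀ i j : Fin 6, (![4, 5, 0, 1, 2, 3] : Fin 6 → Fin 6) i = j →
      Pi.single i (1 : k) ∈ p → Pi.single j (1 : k) ∈ p := by
    intro i j hij hi
    have h := A2 _ hi
    rwa [comp_single, tinv2, hij] at h
  by_cases hbot : p = ⊥
  · refine ⟨⊤, fun g _ v _ => Submodule.mem_top, ?_⟩
    rw [hbot]; exact isCompl_bot_top
  · have htop : p = ⊤ := by
      obtain ⟨v, hv, hv0⟩ := (Submodule.ne_bot_iff p).mp hbot
      obtain ⟨i, hi⟩ := Function.ne_iff.mp hv0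
      have h1 : Pi.single i (1 : k) ∈ p := by
        convert p.smul_mem (v i)⁻¹ (hsgl v hv i) using 1
        funext x
        by_cases hx : x = i
        · subst hx; simp [inv_mul_cancel₀ hi]
        · simp [Pi.single_apply, hx]
      have h0 : Pi.single (0 : Fin 6) (1 : k) ∈ p := by
        fin_cases i
        · exact h1
        · exact M2 2 0 (by decide) (M1 1 2 (by decide) h1)
        · exact M2 2 0 (by decide) h1
        · exact M2 2 0 (by decide) (M1 1 2 (by decide) (M2 3 1 (by decide) h1))
        · exact M2 2 0 (by decide) (M2 4 2 (by decide) h1)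
        · exact M2 2 0 (by decide) (M1 1 2 (by decide) (M2 3 1 (by decide)
            (M2 5 3 (by decide) h1)))
      have h3 : Pi.single (3 : Fin 6) (1 : k) ∈ p := M1 0 3 (by decide) h0
      have h4 : Pi.single (4 : Fin 6) (1 : k) ∈ p := M2 0 4 (by decide) h0
      have h2' : Pi.single (2 : Fin 6) (1 : k) ∈ p := M2 4 2 (by decide) h4
      have h1' : Pi.single (1 : Fin 6) (1 : k) ∈ p := M1 2 1 (by decide) h2'
      have h5 : Pi.single (5 : Fin 6) (1 : k) ∈ p := M2 1 5 (by decide) h1'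
      have hall : ∀ j : Fin 6, Pi.single j (1 : k) ∈ p := by
        intro j
        fin_cases j
        exacts [h0, h1', h2', h3, h4, h5]
      rw [Submodule.eq_top_iff']
      intro x
      have hx : x = ∑ j : Fin 6, Pi.single j (x j) := (Finset.univ_sum_single x).symm
      rw [hx]
      refine Submodule.sum_mem _ fun j _ => ?_
      convert p.smul_mem (x j) (hall j) using 1
      funext y
      by_cases hy : y = j
      · subst hy; simp
      · simp [Pi.single_apply, hy]
    refine ⟨⊥, ?_, ?_⟩
    · intro g _ v hv
      rw [Submodule.mem_bot] at hv ⊢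
      rw [hv, Matrix.mulVec_zero]
    · rw [htop]; exact isCompl_top_bot
end

section
/- Let k be an algebraically closed field of characteristic 2 and b ∈ k with b³ = 1 and b ≠ 1. Let K ≤ GL₆(k) be the subgroup generated by the permutation matrices of (1 4)(2 3)(5 6), (1 3 5)(2 4 6) and (2 4 6) together with the diagonal matrix diag(b, 1, b⁻¹, 1, 1, 1). Then the natural 6-dimensional module k⁶ is a simple (irreducible) K-module: its only K-invariant subspaces are 0 and k⁶. -/
/-!
The diagonal generator has the eigenvalue `b` only on `e₀`, its other eigenvalues `1` and `b⁻¹`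
being different from `b`; so the product of the `D - λ` over those other eigenvalues `λ` sends
each vector of an invariant subspace to a nonzero multiple of its `e₀`-component. Words in the
permutation generators move coordinate `0` to every other coordinate, and in a finite group their
inverses are words too; so a nonzero invariant subspace contains `e₀`, and then every `eᵢ`.
-/

open Matrix

open Equiv Finset

section

variable {R : Type*} [Semiring R] {n : Type*}

def Submodule.coordPermStabilizer (p : Submodule R (n → R)) : Submonoid (Perm n) where
  carrier := {s | ∀ v ∈ p, v ∘ s ∈ p}
  one_mem' _ hv := hv
  mul_mem' hs ht v hv := ht _ (hs v hv)

lemma Submodule.inv_mem_coordPermStabilizer [Finite n] {p : Submodule R (n → R)} {s : Perm n}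
    (hs : s ∈ p.coordPermStabilizer) : s⁻¹ ∈ p.coordPermStabilizer := by
  have hpow : s⁻¹ ∈ Submonoid.powers s :=
    (isOfFinOrder_of_finite s).mem_powers_iff_mem_zpowers.2
      (Subgroup.inv_mem _ (Subgroup.mem_zpowers s))
  exact Submonoid.powers_le.2 hs hpow

lemma Submodule.eq_top_of_forall_single_one_mem [Finite n] [DecidableEq n]
    {p : Submodule R (n → R)} (h : ∀ i, Pi.single i 1 ∈ p) : p = ⊤ := by
  rw [eq_top_iff, ← (Pi.basisFun R n).span_eq, Submodule.span_le]
  rintro _ ⟨i, rfl⟩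
  simpa using h i

end

section

variable {k : Type*} [Field k] {n : Type*} [Fintype n] [DecidableEq n]

lemma coe_permGL (s : Perm n) : (permGL k s : Matrix n n k) = s.permMatrix k := rfl

lemma permGL_mem_coordPermStabilizer {p : Submodule k (n → k)} {s : Perm n}
    (hs : ∀ v ∈ p, (permGL k s : Matrix n n k) *ᵥ v ∈ p) : s ∈ p.coordPermStabilizer :=
  fun v hv => by simpa [coe_permGL, permMatrix_mulVec] using hs v hv

lemma Submodule.single_mem_of_diagonal_mulVec_mem {p : Submodule k (n → k)} {d : n → k}
    {i : n} (hd : ∀ v ∈ p, diagonal d *ᵥ v ∈ p) (hsep : ∀ j ≠ i, d j ≠ d i)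
    {v : n → k} (hv : v ∈ p) : Pi.single i (v i) ∈ p := by
  -- `(∏ j ∈ s, (diagonal d - d j)) *ᵥ v`
  have hprod : ∀ s : Finset n, (fun l => (∏ j ∈ s, (d l - d j)) * v l) ∈ p := by
    intro s
    induction s using Finset.induction_on with
    | empty => simpa using hv
    | insert j s hj ih =>
      convert p.sub_mem (hd _ ih) (p.smul_mem (d j) ih) using 1
      ext l
      simp only [prod_insert hj, mulVec_diagonal, Pi.sub_apply, Pi.smul_apply, smul_eq_mul]
      ring
  have hc : ∏ j ∈ univ.erase i, (d i - d j) ≠ 0 :=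
    prod_ne_zero_iff.2 fun j hj => sub_ne_zero.2 (hsep j (ne_of_mem_erase hj)).symm
  convert p.smul_mem (∏ j ∈ univ.erase i, (d i - d j))⁻¹ (hprod (univ.erase i)) using 1
  ext l
  rcases eq_or_ne l i with rfl | hl
  · simp [hc]
  · have hzero : ∏ j ∈ univ.erase i, (d l - d j) = 0 :=
      prod_eq_zero (mem_erase.2 ⟨hl, mem_univ l⟩) (sub_self _)
    simp [hl, hzero]

theorem Submodule.eq_bot_or_eq_top_of_diagonal_of_transitive {p : Submodule k (n → k)}
    {d : n → k} {i₀ : n} (hd : ∀ v ∈ p, diagonal d *ᵥ v ∈ p) (hsep : ∀ j ≠ i₀, d j ≠ d i₀)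
    (htrans : ∀ i, ∃ s ∈ p.coordPermStabilizer, s i₀ = i) : p = ⊥ ∨ p = ⊤ := by
  refine or_iff_not_imp_left.2 fun hne => ?_
  obtain ⟨v, hv, hv0⟩ := p.ne_bot_iff.1 hne
  obtain ⟨i, hi⟩ := Function.ne_iff.1 hv0
  obtain ⟨s, hs, rfl⟩ := htrans i
  have hsingle : Pi.single i₀ 1 ∈ p := by
    have h := p.smul_mem (v (s i₀))⁻¹ (p.single_mem_of_diagonal_mulVec_mem hd hsep (hs v hv))
    rwa [← Pi.single_smul, Function.comp_apply, smul_eq_mul, inv_mul_cancel₀ hi] at h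
  refine p.eq_top_of_forall_single_one_mem fun j => ?_
  obtain ⟨t, ht, rfl⟩ := htrans j
  simpa [Pi.single_comp_equiv] using p.inv_mem_coordPermStabilizer ht _ hsingle

end

lemma inv_ne_self_of_pow_three_eq_one {k : Type*} [Field k] {b : k} (hb3 : b ^ 3 = 1)
    (hb1 : b ≠ 1) : b⁻¹ ≠ b := by
  intro h
  have hb0 : b ≠ 0 := by rintro rfl; simp at hb3
  have hsq : b * b = 1 := by nth_rewrite 1 [← h]; exact inv_mul_cancel₀ hb0
  exact hb1 (by linear_combination hb3 - b * hsq)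

/-- The natural 6-dimensional module `k⁶` for the subgroup `K ≤ GL₆(k)` generated by the
given permutation matrices and the diagonal matrix is simple: its only K-invariant subspaces are 0 and k⁶. -/
theorem stmt_6 (k : Type*) [Field k]
    (b : k) (hb3 : b ^ 3 = 1) (hb1 : b ≠ 1)
    (K : Subgroup (Matrix.GeneralLinearGroup (Fin 6) k))
    (hK : K = Subgroup.closure
      { permGL k (c[(0 : Fin 6), 3] * c[(1 : Fin 6), 2] * c[(4 : Fin 6), 5]),
        permGL k (c[(0 : Fin 6), 2, 4] * c[(1 : Fin 6), 3, 5]),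
        permGL k (c[(1 : Fin 6), 3, 5]),
        diagGL k ![b, 1, b⁻¹, 1, 1, 1] (by
          have hb0 : b ≠ 0 := fun h => by simp [h] at hb3
          intro i
          fin_cases i
          exacts [hb0, one_ne_zero, inv_ne_zero hb0, one_ne_zero, one_ne_zero, one_ne_zero]) })
    (p : Submodule k (Fin 6 → k))
    (hp : ∀ g ∈ K, ∀ v ∈ p, (g : Matrix (Fin 6) (Fin 6) k).mulVec v ∈ p) :
    p = ⊥ ∨ p = ⊤ := by
  subst hK
  have hσ := permGL_mem_coordPermStabilizer (hp _ (Subgroup.subset_closure (Set.mem_insert _ _)))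
  have hτ := permGL_mem_coordPermStabilizer
    (hp _ (Subgroup.subset_closure (Set.mem_insert_of_mem _ (Set.mem_insert _ _))))
  refine p.eq_bot_or_eq_top_of_diagonal_of_transitive (i₀ := 0)
    (hp _ (Subgroup.subset_closure (Set.mem_insert_of_mem _ (Set.mem_insert_of_mem _
      (Set.mem_insert_of_mem _ rfl))))) ?_ ?_
  · intro j hj
    fin_cases j
    exacts [absurd rfl hj, hb1.symm, inv_ne_self_of_pow_three_eq_one hb3 hb1, hb1.symm, hb1.symm,
      hb1.symm]
  · intro i
    fin_cases i
    exacts [⟨1, one_mem _, rfl⟩, ⟨_, mul_mem hσ hτ, by decide⟩, ⟨_, hτ, by decide⟩,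
      ⟨_, hσ, by decide⟩, ⟨_, mul_mem hτ hτ, by decide⟩, ⟨_, mul_mem hσ (mul_mem hτ hτ), by decide⟩]
end

section
/- Let k be an algebraically closed field of characteristic 2 and b ∈ k with b³ = 1 and b ≠ 1. Let K ≤ GL₆(k) be the subgroup generated by the permutation matrices of (1 4)(2 3)(5 6), (3 5)(4 6), (1 3 5) and (2 4 6) together with the diagonal matrix diag(b, 1, b⁻¹, 1, 1, 1). Then the natural 6-dimensional module k⁶ is a semisimple K-module: every K-invariant subspace of k⁶ admits a K-invariant direct complement. -/
open Matrix

/-- The natural 6-dimensional module `k⁶` for the subgroup `K ≤ GL₆(k)` generated by the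
given permutation matrices and the diagonal matrix is semisimple: every K-invariant subspace has a K-invariant direct complement. -/
theorem stmt_7 (k : Type*) [Field k] [IsAlgClosed k] [CharP k 2]
    (b : k) (hb3 : b ^ 3 = 1) (hb1 : b ≠ 1)
    (K : Subgroup (Matrix.GeneralLinearGroup (Fin 6) k))
    (hK : K = Subgroup.closure
      { permGL k (c[(0 : Fin 6), 3] * c[(1 : Fin 6), 2] * c[(4 : Fin 6), 5]),
        permGL k (c[(2 : Fin 6), 4] * c[(3 : Fin 6), 5]),
        permGL k (c[(0 : Fin 6), 2, 4]),
        permGL k (c[(1 : Fin 6), 3, 5]),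
        diagGL k ![b, 1, b⁻¹, 1, 1, 1] (by
          have hb0 : b ≠ 0 := fun h => by simp [h] at hb3
          intro i
          fin_cases i
          exacts [hb0, one_ne_zero, inv_ne_zero hb0, one_ne_zero, one_ne_zero, one_ne_zero]) })
    (p : Submodule k (Fin 6 → k))
    (hp : ∀ g ∈ K, ∀ v ∈ p, (g : Matrix (Fin 6) (Fin 6) k).mulVec v ∈ p) :
    ∃ q : Submodule k (Fin 6 → k),
      (∀ g ∈ K, ∀ v ∈ q, (g : Matrix (Fin 6) (Fin 6) k).mulVec v ∈ q) ∧ IsCompl p q := by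
  set e : Fin 6 → Fin 6 → k := fun j m => if m = j then 1 else 0 with he
  set σa := (c[(0 : Fin 6), 3] * c[(1 : Fin 6), 2] * c[(4 : Fin 6), 5]) with hσa
  set σc := (c[(0 : Fin 6), 2, 4]) with hσc
  set σd := (c[(1 : Fin 6), 3, 5]) with hσd
  have hb0 : b ≠ 0 := fun h => by simp [h] at hb3
  have htwo : (2 : k) = 0 := CharP.cast_eq_zero k 2
  -- generator memberships
  have hga : permGL k σa ∈ K := (by rw [hK]; exact Subgroup.subset_closure (by simp))
  have hgc : permGL k σc ∈ K := (by rw [hK]; exact Subgroup.subset_closure (by simp))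
  have hgd : permGL k σd ∈ K := (by rw [hK]; exact Subgroup.subset_closure (by simp))
  have hgt : ∀ hd, diagGL k ![b, 1, b⁻¹, 1, 1, 1] hd ∈ K :=
    fun hd => by rw [hK]; exact Subgroup.subset_closure (by simp [diagGL])
  -- action of permutation generators
  have hperm : ∀ σ : Equiv.Perm (Fin 6), permGL k σ ∈ K → ∀ v ∈ p,
      (fun m => v (σ m)) ∈ p := by
    intro σ hσ v hv
    have h1 := hp _ hσ v hv
    have hco : ((permGL k σ : GL (Fin 6) k) : Matrix (Fin 6) (Fin 6) k) = σ.permMatrix k := rfl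
    have h2 : (σ.permMatrix k).mulVec v = fun m => v (σ m) := by
      funext i
      simp [Matrix.mulVec, dotProduct, Equiv.Perm.permMatrix, PEquiv.toMatrix,
        Equiv.toPEquiv]
    rwa [hco, h2] at h1
  -- action of the diagonal generator
  have hdiag : ∀ v ∈ p, (fun m => ![b, 1, b⁻¹, 1, 1, 1] m * v m) ∈ p := by
    intro v hv
    have hd : ∀ i, (![b, 1, b⁻¹, 1, 1, 1] : Fin 6 → k) i ≠ 0 := by
      intro i
      fin_cases i
      exacts [hb0, one_ne_zero, inv_ne_zero hb0, one_ne_zero, one_ne_zero, one_ne_zero]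
    have h1 := hp _ (hgt hd) v hv
    have hco : ((diagGL k ![b, 1, b⁻¹, 1, 1, 1] hd : GL (Fin 6) k) : Matrix (Fin 6) (Fin 6) k)
        = Matrix.diagonal ![b, 1, b⁻¹, 1, 1, 1] := rfl
    have h2 : (Matrix.diagonal ![b, 1, b⁻¹, 1, 1, 1]).mulVec v
        = fun m => ![b, 1, b⁻¹, 1, 1, 1] m * v m := by
      funext i; rw [Matrix.mulVec_diagonal]
    rwa [hco, h2] at h1
  -- eigenspace projection at coordinate 0
  have hL0 : ∀ v ∈ p, (fun m => if m = 0 then v 0 else (0 : k)) ∈ p := by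
    intro v hv
    have hw1 := hdiag v hv
    have hw2 := hdiag _ hw1
    have hbc : b * b⁻¹ = 1 := mul_inv_cancel₀ hb0
    have hconst : (1 + b) * (b + b⁻¹) ≠ 0 := by
      apply mul_ne_zero
      · intro h
        exact hb1 (by linear_combination h - htwo)
      · intro h
        have hb2 : b * b = 1 := by linear_combination b * h - hbc - htwo
        exact hb1 (by linear_combination hb3 - b * hb2)
    have hE : ((fun m => ![b, 1, b⁻¹, 1, 1, 1] m * (![b, 1, b⁻¹, 1, 1, 1] m * v m))
          + (1 + b⁻¹) • (fun m => ![b, 1, b⁻¹, 1, 1, 1] m * v m) + b⁻¹ • v : Fin 6 → k)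
        = ((1 + b) * (b + b⁻¹)) • (fun m => if m = 0 then v 0 else (0 : k)) := by
      funext m
      fin_cases m <;>
        simp only [Pi.add_apply, Pi.smul_apply, smul_eq_mul] <;>
        norm_num [Fin.ext_iff]
      · ring
      · linear_combination (v 1 + b⁻¹ * v 1) * htwo
      · linear_combination (b⁻¹ * b⁻¹ * v ⟨2, by omega⟩ + b⁻¹ * v ⟨2, by omega⟩) * htwo
      · linear_combination (v ⟨3, by omega⟩ + b⁻¹ * v ⟨3, by omega⟩) * htwo
      · linear_combination (v ⟨4, by omega⟩ + b⁻¹ * v ⟨4, by omega⟩) * htwo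
      · linear_combination (v ⟨5, by omega⟩ + b⁻¹ * v ⟨5, by omega⟩) * htwo
    have hEp : (((1 + b) * (b + b⁻¹)) • (fun m => if m = 0 then v 0 else (0 : k))) ∈ p := by
      rw [← hE]
      exact p.add_mem (p.add_mem hw2 (p.smul_mem _ hw1)) (p.smul_mem _ hv)
    have h3 := p.smul_mem ((1 + b) * (b + b⁻¹))⁻¹ hEp
    rwa [← smul_assoc, smul_eq_mul, inv_mul_cancel₀ hconst, one_smul] at h3
  by_cases hpbot : p = ⊥
  · refine ⟨⊤, fun g _ v _ => trivial, ?_⟩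
    rw [hpbot]; exact isCompl_bot_top
  · obtain ⟨v, hv, hv0⟩ := Submodule.ne_bot_iff p |>.mp hpbot
    obtain ⟨i, hvi⟩ := Function.ne_iff.mp hv0
    have hQ0 : ∀ i : Fin 6, ∀ v ∈ p, v i ≠ 0 → e 0 ∈ p := by
      have Qbase : ∀ v ∈ p, v 0 ≠ 0 → e 0 ∈ p := by
        intro v hv hvne
        have h1 := hL0 v hv
        have h2 := p.smul_mem (v 0)⁻¹ h1
        have h3 : (v 0)⁻¹ • (fun m => if m = 0 then v 0 else (0 : k)) = e 0 := by
          funext m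
          by_cases hm : m = 0 <;> simp [he, hm, inv_mul_cancel₀ hvne]
        rwa [h3] at h2
      have Qstep : ∀ σ : Equiv.Perm (Fin 6), permGL k σ ∈ K → ∀ j : Fin 6,
          (∀ v ∈ p, v j ≠ 0 → e 0 ∈ p) → (∀ v ∈ p, v (σ j) ≠ 0 → e 0 ∈ p) := by
        intro σ hσ j hQ v hv hne
        exact hQ _ (hperm σ hσ v hv) hne
      have Q0 := Qbase
      have Q2 := Qstep σc hgc 0 Q0
      have Q4 := Qstep σc hgc _ Q2
      have Q3 := Qstep σa hga 0 Q0
      have Q5 := Qstep σd hgd _ Q3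
      have Q1 := Qstep σd hgd _ Q5
      have e02 : σc 0 = 2 := by decide
      have e24 : σc 2 = 4 := by decide
      have e03 : σa 0 = 3 := by decide
      have e35 : σd 3 = 5 := by decide
      have e51 : σd 5 = 1 := by decide
      rw [e02] at Q2; rw [e02, e24] at Q4
      rw [e03] at Q3; rw [e03, e35] at Q5
      rw [e03, e35, e51] at Q1
      intro i
      fin_cases i
      exacts [Q0, Q1, Q2, Q3, Q4, Q5]
    have he0 : e 0 ∈ p := hQ0 i v hv (by simpa using hvi)
    have hmove : ∀ σ : Equiv.Perm (Fin 6), permGL k σ ∈ K → ∀ j : Fin 6,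
        e (σ j) ∈ p → e j ∈ p := by
      intro σ hσ j hj
      have h1 := hperm σ hσ _ hj
      have h2 : (fun m => e (σ j) (σ m)) = e j := by
        funext m
        simp only [he]
        exact if_congr ⟨fun h => σ.injective h, fun h => h ▸ rfl⟩ rfl rfl
      rwa [h2] at h1
    have c40 : σc 4 = 0 := by decide
    have c24 : σc 2 = 4 := by decide
    have a30 : σa 3 = 0 := by decide
    have d13 : σd 1 = 3 := by decide
    have d51 : σd 5 = 1 := by decide
    have he4 : e 4 ∈ p := hmove σc hgc 4 (by rwa [c40])
    have he2 : e 2 ∈ p := hmove σc hgc 2 (by rwa [c24])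
    have he3 : e 3 ∈ p := hmove σa hga 3 (by rwa [a30])
    have he1 : e 1 ∈ p := hmove σd hgd 1 (by rwa [d13])
    have he5 : e 5 ∈ p := hmove σd hgd 5 (by rwa [d51])
    have hptop : p = ⊤ := by
      rw [Submodule.eq_top_iff']
      intro x
      rw [pi_eq_sum_univ x]
      refine Submodule.sum_mem p fun j _ => Submodule.smul_mem p _ ?_
      have hj : (fun m => if j = m then (1:k) else 0) = e j := by
        funext m; simp [he, eq_comm]
      rw [hj]
      fin_cases j
      exacts [he0, he1, he2, he3, he4, he5]
    refine ⟨⊥, fun g _ w hw => ?_, ?_⟩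
    · rw [Submodule.mem_bot] at hw ⊢
      rw [hw, Matrix.mulVec_zero]
    · rw [hptop]; exact isCompl_top_bot
end

section
/- Let k be an algebraically closed field of characteristic 2 and let K ≤ S₇ be the subgroup generated by the permutations (2 6 7)(3 5 4), (2 5)(3 7)(4 6) and (1 6 7 5 2 3 4) (a Frobenius group of order 42). Then the natural 7-dimensional permutation module k⁷, on which K acts by permuting the standard basis vectors, is a semisimple K-module: every K-invariant subspace of k⁷ admits a K-invariant direct complement. -/
/-!
The 7-cycle `σ = (0 5 6 4 1 2 3)` in `K` has order prime to the characteristic, so it is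
diagonalised by the Fourier vectors `i ↦ ψ (a * pos i)`, `a : ZMod 7`, where `ψ` is a faithful
additive character and `pos i` is the position of `i` along `σ`. Its eigenvalues `ψ (-a)` are
distinct, so every `σ`-invariant subspace is spanned by the Fourier vectors it contains. In the
coordinate `pos` the generators of `K` are affine maps `x ↦ u * x + t` of `ZMod 7`, and such a map
sends the Fourier vector of index `a` to a multiple of the one of index `u * a`. If `p`, spanned by
the Fourier vectors with index in `S`, is `K`-invariant, these bijections of the index set preserve
`S`, hence also its complement, and the span of the remaining Fourier vectors is a `K`-invariant
complement of `p`.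
-/

open Module Set Submodule

section Eigenbasis

variable {k V ι : Type*} [Field k] [AddCommGroup V] [Module k V] [Fintype ι]
  (b : Basis ι k V) {f : Module.End k V} {μ : ι → k}

theorem Module.Basis.aeval_lagrangeBasis_apply [DecidableEq ι] (hμ : Function.Injective μ)
    (hf : ∀ i, f (b i) = μ i • b i) (x : V) (i : ι) :
    Polynomial.aeval f (Lagrange.basis Finset.univ μ i) x = b.repr x i • b i := by
  conv_lhs => rw [← b.sum_repr x]
  rw [map_sum, Finset.sum_eq_single i]
  · rw [map_smul, End.aeval_apply_of_mem_apply_eq_smul (hf i),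
      Lagrange.eval_basis_self hμ.injOn (Finset.mem_univ i), one_smul]
  · intro j _ hji
    rw [map_smul, End.aeval_apply_of_mem_apply_eq_smul (hf j),
      Lagrange.eval_basis_of_ne hji.symm (Finset.mem_univ j), zero_smul, smul_zero]
  · simp

theorem Module.Basis.mem_of_repr_ne_zero_of_mem_invtSubmodule (hμ : Function.Injective μ)
    (hf : ∀ i, f (b i) = μ i • b i) {p : Submodule k V} (hp : p ∈ f.invtSubmodule)
    {x : V} (hx : x ∈ p) {i : ι} (hi : b.repr x i ≠ 0) : b i ∈ p := by
  classical
  have h := Polynomial.aeval_apply_smul_mem_of_le_comap hx (Lagrange.basis Finset.univ μ i) f hp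
  rwa [b.aeval_lagrangeBasis_apply hμ hf, p.smul_mem_iff hi] at h

theorem Module.Basis.exists_eq_span_image_of_mem_invtSubmodule (hμ : Function.Injective μ)
    (hf : ∀ i, f (b i) = μ i • b i) {p : Submodule k V} (hp : p ∈ f.invtSubmodule) :
    ∃ S : Set ι, p = span k (b '' S) := by
  refine ⟨{i | b i ∈ p}, le_antisymm (fun x hx => ?_) (span_le.mpr (image_subset_iff.mpr
    fun i hi => hi))⟩
  rw [← b.sum_repr x]
  refine sum_mem fun i _ => ?_
  by_cases hi : b.repr x i = 0
  · simp [hi]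
  · exact smul_mem _ _ (subset_span ⟨i, b.mem_of_repr_ne_zero_of_mem_invtSubmodule hμ hf hp hx hi,
      rfl⟩)

end Eigenbasis

theorem Module.Basis.span_image_compl_mem_invtSubmodule {k V ι : Type*} [DivisionRing k]
    [AddCommGroup V] [Module k V] [Finite ι] (b : Basis ι k V) {T : Module.End k V}
    {π : ι → ι} (hπ : Function.Injective π) {c : ι → k} (hc : ∀ i, c i ≠ 0)
    (hT : ∀ i, T (b i) = c i • b (π i)) {S : Set ι} (hS : span k (b '' S) ∈ T.invtSubmodule) :
    span k (b '' Sᶜ) ∈ T.invtSubmodule := by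
  have hmaps : MapsTo π S S := fun i hi => by
    have h := hS (subset_span (mem_image_of_mem b hi))
    rwa [mem_comap, hT, smul_mem_iff _ (hc i), b.self_mem_span_image] at h
  have hmaps_compl : MapsTo π Sᶜ Sᶜ := fun i hi hπi => by
    obtain ⟨j, hj, hji⟩ := ((S.toFinite.injOn_iff_bijOn_of_mapsTo hmaps).mp hπ.injOn).surjOn hπi
    exact hi (hπ hji ▸ hj)
  rw [End.mem_invtSubmodule, span_le]
  rintro _ ⟨i, hi, rfl⟩
  rw [SetLike.mem_coe, mem_comap, hT]
  exact smul_mem _ _ (subset_span (mem_image_of_mem b (hmaps_compl hi)))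

theorem Representation.mem_invtSubmodule_of_mem_closure {k G V : Type*} [CommSemiring k]
    [Group G] [Finite G] [AddCommMonoid V] [Module k V] (ρ : Representation k G V) {s : Set G}
    {q : Submodule k V} (hs : ∀ g ∈ s, q ∈ End.invtSubmodule (ρ g)) {g : G}
    (hg : g ∈ Subgroup.closure s) : q ∈ End.invtSubmodule (ρ g) := by
  rw [← Subgroup.mem_toSubmonoid, Subgroup.closure_toSubmonoid_of_finite] at hg
  induction hg using Submonoid.closure_induction with
  | mem g hg => exact hs g hg
  | one => simp
  | mul g h _ _ hg hh => rw [map_mul]; exact End.invtSubmodule.comp _ hg hh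

def permRep (k X : Type*) [CommSemiring k] : Representation k (Equiv.Perm X) (X → k) where
  toFun g := LinearMap.funLeft k k ⇑g⁻¹
  map_one' := rfl
  map_mul' _ _ := rfl

theorem IsPrimitiveRoot.zmodChar_injective {C : Type*} [CommMonoid C] {ζ : C} {n : ℕ} [NeZero n]
    (hζ : IsPrimitiveRoot ζ n) : Function.Injective (AddChar.zmodChar n hζ.pow_eq_one) :=
  fun a b h => ZMod.val_injective n (hζ.pow_inj (ZMod.val_lt a) (ZMod.val_lt b) h)

section Fourier

variable {k X : Type*} [Field k] {n : ℕ} (ψ : AddChar (ZMod n) k) (pos : X → ZMod n)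

def fourierVec (a : ZMod n) : X → k := fun x => ψ (a * pos x)

theorem permRep_fourierVec {g : Equiv.Perm X} {u t : ZMod n}
    (hg : ∀ x, pos (g⁻¹ x) = u * pos x + t) (a : ZMod n) :
    permRep k X g (fourierVec ψ pos a) = ψ (a * t) • fourierVec ψ pos (u * a) := by
  funext x
  change ψ (a * pos (g⁻¹ x)) = ψ (a * t) * ψ (u * a * pos x)
  rw [hg, ← AddChar.map_add_eq_mul]
  ring_nf

theorem permRep_fourierVec_of_shift {σ : Equiv.Perm X} (hσ : ∀ x, pos (σ⁻¹ x) = pos x - 1)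
    (a : ZMod n) : permRep k X σ (fourierVec ψ pos a) = ψ (-a) • fourierVec ψ pos a := by
  rw [permRep_fourierVec ψ pos (u := 1) (t := -1) (fun x => by rw [hσ]; ring), mul_neg_one,
    one_mul]

theorem linearIndependent_fourierVec [Nonempty X] (hψ : Function.Injective ψ)
    {σ : Equiv.Perm X} (hσ : ∀ x, pos (σ⁻¹ x) = pos x - 1) :
    LinearIndependent k (fourierVec ψ pos) := by
  refine End.eigenvectors_linearIndependent' (permRep k X σ) (fun a => ψ (-a))
    (hψ.comp neg_injective) _ fun a => ⟨?_, ?_⟩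
  · exact End.mem_eigenspace_iff.mpr (permRep_fourierVec_of_shift ψ pos hσ a)
  · obtain ⟨x⟩ := ‹Nonempty X›
    exact fun h => (ψ.val_isUnit _).ne_zero (congrFun h x)

variable [Fintype X] [NeZero n]

noncomputable def fourierVecBasis (hψ : Function.Injective ψ) (hpos : Function.Bijective pos)
    {σ : Equiv.Perm X} (hσ : ∀ x, pos (σ⁻¹ x) = pos x - 1) : Basis (ZMod n) k (X → k) :=
  haveI : Nonempty X := ⟨(hpos.2 0).choose⟩
  basisOfLinearIndependentOfCardEqFinrank (linearIndependent_fourierVec ψ pos hψ hσ)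
    (by rw [finrank_fintype_fun_eq_card, Fintype.card_of_bijective hpos])

@[simp]
theorem coe_fourierVecBasis (hψ : Function.Injective ψ) (hpos : Function.Bijective pos)
    {σ : Equiv.Perm X} (hσ : ∀ x, pos (σ⁻¹ x) = pos x - 1) :
    ⇑(fourierVecBasis ψ pos hψ hpos hσ) = fourierVec ψ pos :=
  coe_basisOfLinearIndependentOfCardEqFinrank _ _

theorem span_fourierVecBasis_compl_mem_invtSubmodule (hψ : Function.Injective ψ)
    (hpos : Function.Bijective pos) {σ : Equiv.Perm X} (hσ : ∀ x, pos (σ⁻¹ x) = pos x - 1)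
    {g : Equiv.Perm X} {u t : ZMod n} (hu : IsUnit u) (hg : ∀ x, pos (g⁻¹ x) = u * pos x + t)
    {S : Set (ZMod n)}
    (hS : span k (fourierVecBasis ψ pos hψ hpos hσ '' S) ∈ End.invtSubmodule (permRep k X g)) :
    span k (fourierVecBasis ψ pos hψ hpos hσ '' Sᶜ) ∈ End.invtSubmodule (permRep k X g) :=
  (fourierVecBasis ψ pos hψ hpos hσ).span_image_compl_mem_invtSubmodule hu.mul_right_injective
    (fun a => (ψ.val_isUnit (a * t)).ne_zero) (by simpa using permRep_fourierVec ψ pos hg) hS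

end Fourier

/-- Relabelled by `cyclePos`, the generators of `K` become affine maps of `ZMod 7`. -/
def cyclePos : Fin 7 → ZMod 7 := ![0, 4, 5, 6, 3, 1, 2]

/-- The natural 7-dimensional permutation module `k^7` over an algebraically closed field `k`
of characteristic 2, for the given subgroup `K` of the symmetric group (acting by permuting the
standard basis vectors, `g • v = fun i => v (g⁻¹ i)`, so that `g • e_i = e_(g i)`), is semisimple:
every `K`-invariant subspace admits a `K`-invariant direct complement. -/
theorem stmt_11 (k : Type*) [Field k] [IsAlgClosed k] [CharP k 2]
    (K : Subgroup (Equiv.Perm (Fin 7)))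
    (hK : K = Subgroup.closure
      { c[(1 : Fin 7), 5, 6] * c[(2 : Fin 7), 4, 3],
      c[(1 : Fin 7), 4] * c[(2 : Fin 7), 6] * c[(3 : Fin 7), 5],
      c[(0 : Fin 7), 5, 6, 4, 1, 2, 3] })
    (p : Submodule k (Fin 7 → k))
    (hp : ∀ g ∈ K, ∀ v ∈ p, (fun i => v (g⁻¹ i)) ∈ p) :
    ∃ q : Submodule k (Fin 7 → k),
      (∀ g ∈ K, ∀ v ∈ q, (fun i => v (g⁻¹ i)) ∈ q) ∧ IsCompl p q := by
  have : NeZero ((7 : ℕ) : k) :=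
    ⟨by rw [show ((7 : ℕ) : k) = 2 * 3 + 1 by norm_num, CharTwo.two_eq_zero]; simp⟩
  obtain ⟨ζ, hζ⟩ := HasEnoughRootsOfUnity.exists_primitiveRoot k 7
  set ψ := AddChar.zmodChar 7 hζ.pow_eq_one
  have hσ : ∀ x, cyclePos (c[(0 : Fin 7), 5, 6, 4, 1, 2, 3]⁻¹ x) = cyclePos x - 1 := by decide
  set b := fourierVecBasis ψ cyclePos hζ.zmodChar_injective (by decide) hσ
  have hpK : ∀ g ∈ K, p ∈ End.invtSubmodule (permRep k (Fin 7) g) := fun g hg _ hv => hp g hg _ hv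
  obtain ⟨S, rfl⟩ := b.exists_eq_span_image_of_mem_invtSubmodule
    (hζ.zmodChar_injective.comp neg_injective)
    (by simpa [b] using permRep_fourierVec_of_shift ψ cyclePos hσ)
    (hpK _ (hK ▸ Subgroup.subset_closure (by simp)))
  refine ⟨span k (b '' Sᶜ), fun g hg _ hv => (permRep k (Fin 7)).mem_invtSubmodule_of_mem_closure
    ?_ (hK ▸ hg) hv, b.linearIndependent.isCompl_span_image b.span_eq isCompl_compl⟩
  intro g hg
  have hgK : g ∈ K := hK ▸ Subgroup.subset_closure hg
  rcases hg with rfl | rfl | rfl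
  · exact span_fourierVecBasis_compl_mem_invtSubmodule _ _ _ _ _ (u := 4) (t := 0)
      (.of_mul_eq_one 2 (by decide)) (by decide) (hpK _ hgK)
  · exact span_fourierVecBasis_compl_mem_invtSubmodule _ _ _ _ _ (u := 6) (t := 0)
      (.of_mul_eq_one 6 (by decide)) (by decide) (hpK _ hgK)
  · exact span_fourierVecBasis_compl_mem_invtSubmodule _ _ _ _ _ (u := 1) (t := -1)
      isUnit_one (by decide) (hpK _ hgK)
end

section
/- Let k be an algebraically closed field of characteristic 2 and let K ≤ S₈ be the subgroup generated by the permutations (2 6)(4 5)(7 8) and (1 4 2 8 7 6 5) (a group of order 14). Then the natural 8-dimensional permutation module k⁸, on which K acts by permuting the standard basis vectors, is a semisimple K-module: every K-invariant subspace of k⁸ admits a K-invariant direct complement. -/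
namespace Stmt12

def sg : Equiv.Perm (Fin 8) := c[(0 : Fin 8), 3, 1, 7, 6, 5, 4]
def tu : Equiv.Perm (Fin 8) := c[(1 : Fin 8), 5] * c[(3 : Fin 8), 4] * c[(6 : Fin 8), 7]
def Pm : Fin 8 → ZMod 7 := ![0, 2, 0, 1, 6, 5, 4, 3]

lemma sg_facts : ∀ i : Fin 8, (sg⁻¹ i = 2 ↔ i = 2) ∧ (i ≠ 2 → Pm (sg⁻¹ i) = Pm i - 1) := by decide
lemma tu_facts : ∀ i : Fin 8, (tu⁻¹ i = 2 ↔ i = 2) ∧ (i ≠ 2 → Pm (tu⁻¹ i) = - Pm i) := by decide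
lemma tu_inv : tu⁻¹ = tu := by decide
lemma Pm_inj : ∀ i i' : Fin 8, i ≠ 2 → i' ≠ 2 → (Pm i = Pm i' ↔ i = i') := by decide

variable (k : Type*) [Field k]

/-- The linear action of a permutation. -/
def Ag (g : Equiv.Perm (Fin 8)) : (Fin 8 → k) →ₗ[k] (Fin 8 → k) :=
  LinearMap.funLeft k k (fun i => g⁻¹ i)

variable {k}

lemma Ag_apply (g : Equiv.Perm (Fin 8)) (v : Fin 8 → k) : Ag k g v = fun i => v (g⁻¹ i) := rfl

lemma Ag_Ag (g h : Equiv.Perm (Fin 8)) (v : Fin 8 → k) :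
    Ag k g (Ag k h v) = Ag k (g * h) v := by
  funext i; simp [Ag_apply]

lemma Ag_one (v : Fin 8 → k) : Ag k 1 v = v := rfl

lemma Ag_inv_Ag (g : Equiv.Perm (Fin 8)) (v : Fin 8 → k) : Ag k g⁻¹ (Ag k g v) = v := by
  rw [Ag_Ag, inv_mul_cancel, Ag_one]

lemma Ag_Ag_inv (g : Equiv.Perm (Fin 8)) (v : Fin 8 → k) : Ag k g (Ag k g⁻¹ v) = v := by
  rw [Ag_Ag, mul_inv_cancel, Ag_one]

section zeta

variable (ζ : k) (hord : orderOf ζ = 7)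

/-- `ζ` to a `ZMod 7` power. -/
noncomputable def zp (a : ZMod 7) : k := ζ ^ a.val

include hord

lemma zp_natCast (n : ℕ) : zp ζ (n : ZMod 7) = ζ ^ n := by
  rw [zp, ZMod.val_natCast, ← hord, pow_mod_orderOf]

lemma zp_add (a b : ZMod 7) : zp ζ (a + b) = zp ζ a * zp ζ b := by
  have h1 : ((a.val : ℕ) : ZMod 7) = a := by simp [ZMod.natCast_val, ZMod.cast_id]
  have h2 : ((b.val : ℕ) : ZMod 7) = b := by simp [ZMod.natCast_val, ZMod.cast_id]
  rw [← h1, ← h2, ← Nat.cast_add, zp_natCast ζ hord, zp_natCast ζ hord, zp_natCast ζ hord,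
    pow_add]

lemma zp_zero : zp ζ 0 = 1 := by
  have : ((0 : ℕ) : ZMod 7) = 0 := by norm_num
  rw [← this, zp_natCast ζ hord, pow_zero]

lemma zeta_ne_zero : ζ ≠ 0 := by
  intro h
  have := pow_orderOf_eq_one ζ
  rw [hord, h] at this
  simp at this

lemma zp_ne_zero (a : ZMod 7) : zp ζ a ≠ 0 := pow_ne_zero _ (zeta_ne_zero ζ hord)

lemma zp_eq_one_iff (a : ZMod 7) : zp ζ a = 1 ↔ a = 0 := by
  rw [zp, ← orderOf_dvd_iff_pow_eq_one, hord]
  constructor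
  · intro h
    have := a.val_lt
    interval_cases h' : a.val
    · exact (ZMod.val_eq_zero a).mp h'
    all_goals omega
  · rintro rfl; simp

lemma zp_neg_mul (a : ZMod 7) : zp ζ (-a) * zp ζ a = 1 := by
  rw [← zp_add ζ hord, neg_add_cancel, zp_zero ζ hord]

variable (h7 : (7 : k) = 1)
include h7

lemma gsum (c : ZMod 7) : (∑ a : ZMod 7, zp ζ (a * c)) = if c = 0 then 1 else 0 := by
  split
  · next h =>
    subst h
    simp only [mul_zero, zp_zero ζ hord, Finset.sum_const, Finset.card_univ]
    rw [ZMod.card]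
    norm_num
    exact h7
  · next h =>
    have key : zp ζ c * (∑ a : ZMod 7, zp ζ (a * c)) = ∑ a : ZMod 7, zp ζ (a * c) := by
      rw [Finset.mul_sum]
      apply Fintype.sum_equiv (Equiv.addRight 1)
      intro a
      simp only [Equiv.coe_addRight]
      rw [← zp_add ζ hord]
      ring_nf
    have h2 : (zp ζ c - 1) * (∑ a : ZMod 7, zp ζ (a * c)) = 0 := by
      rw [sub_mul, one_mul, key, sub_self]
    rcases mul_eq_zero.mp h2 with h3 | h3
    · exact absurd ((zp_eq_one_iff ζ hord c).mp (sub_eq_zero.mp h3)) h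
    · exact h3

end zeta

section vectors

variable {k : Type*} [Field k] (ζ : k)

/-- Eigenvectors for the 7-cycle. -/
noncomputable def vv (j : ZMod 7) : Fin 8 → k := fun i => if i = 2 then 0 else zp ζ (-(j * Pm i))

def e2 : Fin 8 → k := fun i => if i = 2 then 1 else 0

variable (hord : orderOf ζ = 7)
include hord

lemma Ag_sg_vv (j : ZMod 7) : Ag k sg (vv ζ j) = zp ζ j • vv ζ j := by
  funext i
  simp only [Ag_apply, vv, Pi.smul_apply, smul_eq_mul]
  by_cases hi : i = 2
  · rw [if_pos (((sg_facts i).1).mpr hi), if_pos hi, mul_zero]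
  · rw [if_neg (fun h => hi ((sg_facts i).1.mp h)), if_neg hi, (sg_facts i).2 hi,
      show -(j * (Pm i - 1)) = j + -(j * Pm i) by ring, zp_add ζ hord]

omit hord in
lemma Ag_tu_vv (j : ZMod 7) : Ag k tu (vv ζ j) = vv ζ (-j) := by
  funext i
  simp only [Ag_apply, vv]
  by_cases hi : i = 2
  · rw [if_pos (((tu_facts i).1).mpr hi), if_pos hi]
  · rw [if_neg (fun h => hi ((tu_facts i).1.mp h)), if_neg hi, (tu_facts i).2 hi,
      show -(j * -Pm i) = -(-j * Pm i) by ring]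

omit hord

lemma Ag_sg_e2 : Ag k sg (e2 : Fin 8 → k) = e2 := by
  funext i
  simp only [Ag_apply, e2]
  by_cases hi : i = 2
  · rw [if_pos (((sg_facts i).1).mpr hi), if_pos hi]
  · rw [if_neg (fun h => hi ((sg_facts i).1.mp h)), if_neg hi]

lemma Ag_tu_e2 : Ag k tu (e2 : Fin 8 → k) = e2 := by
  funext i
  simp only [Ag_apply, e2]
  by_cases hi : i = 2
  · rw [if_pos (((tu_facts i).1).mpr hi), if_pos hi]
  · rw [if_neg (fun h => hi ((tu_facts i).1.mp h)), if_neg hi]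

include hord

lemma Ag_sg_pow_vv (n : ℕ) (j : ZMod 7) :
    Ag k (sg ^ n) (vv ζ j) = zp ζ (j * n) • vv ζ j := by
  induction n with
  | zero => simp [Ag_one, zp_zero ζ hord]
  | succ n ih =>
    rw [pow_succ, ← Ag_Ag, Ag_sg_vv ζ hord, map_smul, ih, smul_smul, ← zp_add ζ hord]
    congr 1
    push_cast
    ring

omit hord

lemma Ag_sg_pow_e2 (n : ℕ) : Ag k (sg ^ n) (e2 : Fin 8 → k) = e2 := by
  induction n with
  | zero => simp [Ag_one]
  | succ n ih => rw [pow_succ, ← Ag_Ag, Ag_sg_e2, ih]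

variable (k)

/-- The fixed space. -/
noncomputable def Tsub : Submodule k (Fin 8 → k) := Submodule.span k {e2, vv ζ 0}

variable {k}

lemma e2_mem_T : (e2 : Fin 8 → k) ∈ Tsub k ζ :=
  Submodule.subset_span (by simp)

lemma vv0_mem_T : vv ζ 0 ∈ Tsub k ζ :=
  Submodule.subset_span (by simp)

include hord in
lemma Ag_sg_pow_T (n : ℕ) : ∀ t ∈ Tsub k ζ, Ag k (sg ^ n) t = t := by
  intro t ht
  induction ht using Submodule.span_induction with
  | mem x hx =>
    rcases hx with h | h
    · rw [h, Ag_sg_pow_e2]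
    · rw [Set.mem_singleton_iff.mp h, Ag_sg_pow_vv ζ hord, zero_mul, zp_zero ζ hord, one_smul]
  | zero => simp
  | add x y _ _ hx hy => rw [map_add, hx, hy]
  | smul c x _ hx => rw [map_smul, hx]

lemma Ag_tu_T : ∀ t ∈ Tsub k ζ, Ag k tu t = t := by
  intro t ht
  induction ht using Submodule.span_induction with
  | mem x hx =>
    rcases hx with h | h
    · rw [h, Ag_tu_e2]
    · rw [Set.mem_singleton_iff.mp h, Ag_tu_vv ζ 0, neg_zero]
  | zero => simp
  | add x y _ _ hx hy => rw [map_add, hx, hy]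
  | smul c x _ hx => rw [map_smul, hx]

end vectors

section proj

variable {k : Type*} [Field k] (ζ : k) (hord : orderOf ζ = 7) (h7 : (7 : k) = 1)

/-- Projection onto the `zp ζ a`-eigenspace of `sg`. -/
noncomputable def pr (a : ZMod 7) : (Fin 8 → k) →ₗ[k] (Fin 8 → k) :=
  ∑ m : ZMod 7, zp ζ (-(a * m)) • Ag k (sg ^ m.val)

lemma pr_apply (a : ZMod 7) (v : Fin 8 → k) :
    pr ζ a v = ∑ m : ZMod 7, zp ζ (-(a * m)) • Ag k (sg ^ m.val) v := by
  simp [pr]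

include hord

lemma val_cast (m : ZMod 7) : ((m.val : ℕ) : ZMod 7) = m := by
  simp [ZMod.natCast_val, ZMod.cast_id]

include h7

lemma pr_vv (a j : ZMod 7) : pr ζ a (vv ζ j) = if a = j then vv ζ j else 0 := by
  rw [pr_apply]
  have hterm : ∀ m : ZMod 7,
      zp ζ (-(a * m)) • Ag k (sg ^ m.val) (vv ζ j) = zp ζ (m * (j - a)) • vv ζ j := by
    intro m
    rw [Ag_sg_pow_vv ζ hord, val_cast ζ hord, smul_smul, ← zp_add ζ hord]
    congr 1
    ring
  rw [Finset.sum_congr rfl (fun m _ => hterm m), ← Finset.sum_smul, gsum ζ hord h7]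
  by_cases h : a = j
  · rw [if_pos (by rw [h, sub_self]), if_pos h, one_smul]
  · rw [if_neg (fun hh => h (sub_eq_zero.mp hh).symm), if_neg h, zero_smul]

omit hord h7

lemma pr_fixed (a : ZMod 7) (t : Fin 8 → k) (hfix : ∀ n : ℕ, Ag k (sg ^ n) t = t)
    (hord : orderOf ζ = 7) (h7 : (7 : k) = 1) :
    pr ζ a t = if a = 0 then t else 0 := by
  rw [pr_apply]
  have hterm : ∀ m : ZMod 7,
      zp ζ (-(a * m)) • Ag k (sg ^ m.val) t = zp ζ (m * (-a)) • t := by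
    intro m
    rw [hfix]
    congr 1
    ring_nf
  rw [Finset.sum_congr rfl (fun m _ => hterm m), ← Finset.sum_smul, gsum ζ hord h7]
  by_cases h : a = 0
  · rw [if_pos (by rw [h, neg_zero]), if_pos h, one_smul]
  · rw [if_neg (fun hh => h (neg_eq_zero.mp hh)), if_neg h, zero_smul]

include hord h7

lemma pr_e2 (a : ZMod 7) : pr ζ a (e2 : Fin 8 → k) = if a = 0 then e2 else 0 :=
  pr_fixed ζ a e2 (fun n => Ag_sg_pow_e2 n) hord h7

lemma pr_T (a : ZMod 7) (t : Fin 8 → k) (ht : t ∈ Tsub k ζ) :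
    pr ζ a t = if a = 0 then t else 0 :=
  pr_fixed ζ a t (fun n => Ag_sg_pow_T ζ hord n t ht) hord h7

lemma pr_sum (v : Fin 8 → k) : ∑ a : ZMod 7, pr ζ a v = v := by
  have : ∀ a : ZMod 7, pr ζ a v = ∑ m : ZMod 7, zp ζ (m * (-a)) • Ag k (sg ^ m.val) v := by
    intro a
    rw [pr_apply]
    exact Finset.sum_congr rfl (fun m _ => by rw [show m * (-a) = -(a * m) by ring])
  rw [Finset.sum_congr rfl (fun a _ => this a), Finset.sum_comm]
  have hterm : ∀ m : ZMod 7,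
      (∑ a : ZMod 7, zp ζ (m * (-a)) • Ag k (sg ^ m.val) v)
        = if m = 0 then Ag k (sg ^ m.val) v else 0 := by
    intro m
    rw [← Finset.sum_smul]
    have : (∑ a : ZMod 7, zp ζ (m * (-a))) = if m = 0 then 1 else 0 := by
      have reidx : (∑ a : ZMod 7, zp ζ (m * (-a))) = ∑ a : ZMod 7, zp ζ (a * m) := by
        apply Fintype.sum_equiv (Equiv.neg (ZMod 7))
        intro a
        simp only [Equiv.neg_apply]
        congr 1
        ring
      rw [reidx, gsum ζ hord h7]
    rw [this]
    split <;> simp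
  rw [Finset.sum_congr rfl (fun m _ => hterm m), Finset.sum_ite_eq' Finset.univ (0 : ZMod 7)]
  simp [Ag_one]

/-- The standard basis vector. -/
lemma std_mem_span (i : Fin 8) :
    (fun j => if i = j then (1:k) else 0) ∈
      Submodule.span k (insert (e2 : Fin 8 → k) (Set.range (vv ζ))) := by
  by_cases hi : i = 2
  · subst hi
    have : (fun j => if (2:Fin 8) = j then (1:k) else 0) = e2 := by
      funext j
      simp [e2, eq_comm]
    rw [this]
    exact Submodule.subset_span (Set.mem_insert _ _)
  · have key : (fun j => if i = j then (1:k) else 0) = ∑ a : ZMod 7, zp ζ (a * Pm i) • vv ζ a := by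
      funext i'
      rw [Finset.sum_apply]
      simp only [Pi.smul_apply, smul_eq_mul, vv]
      by_cases hi' : i' = 2
      · simp only [if_pos hi', mul_zero, Finset.sum_const_zero]
        rw [if_neg (fun h : i = i' => hi (h.trans hi'))]
      · simp only [if_neg hi']
        have : ∀ a : ZMod 7, zp ζ (a * Pm i) * zp ζ (-(a * Pm i')) = zp ζ (a * (Pm i - Pm i')) := by
          intro a
          rw [← zp_add ζ hord]
          congr 1
          ring
        rw [Finset.sum_congr rfl (fun a _ => this a), gsum ζ hord h7]
        by_cases h : i = i'
        · subst h
          rw [if_pos rfl, if_pos (sub_self _)]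
        · rw [if_neg h, if_neg (fun hh => h ((Pm_inj i i' hi hi').mp (sub_eq_zero.mp hh)))]
    rw [key]
    exact Submodule.sum_mem _ (fun a _ => Submodule.smul_mem _ _
      (Submodule.subset_span (Set.mem_insert_iff.mpr (Or.inr ⟨a, rfl⟩))))

lemma span_B : Submodule.span k (insert (e2 : Fin 8 → k) (Set.range (vv ζ))) = ⊤ := by
  rw [eq_top_iff]
  intro w _
  rw [pi_eq_sum_univ w]
  exact Submodule.sum_mem _ (fun i _ => Submodule.smul_mem _ _ (std_mem_span ζ hord h7 i))

lemma pr0_mem_T (v : Fin 8 → k) : pr ζ 0 v ∈ Tsub k ζ := by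
  have hv : v ∈ Submodule.span k (insert (e2 : Fin 8 → k) (Set.range (vv ζ))) := by
    rw [span_B ζ hord h7]; trivial
  induction hv using Submodule.span_induction with
  | mem x hx =>
    rcases Set.mem_insert_iff.mp hx with h | ⟨j, rfl⟩
    · rw [h, pr_e2 ζ hord h7, if_pos rfl]
      exact e2_mem_T ζ
    · rw [pr_vv ζ hord h7]
      by_cases h : (0 : ZMod 7) = j
      · rw [if_pos h, ← h]
        exact vv0_mem_T ζ
      · rw [if_neg h]
        exact Submodule.zero_mem _
  | zero => rw [map_zero]; exact Submodule.zero_mem _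
  | add x y _ _ hx hy => rw [map_add]; exact Submodule.add_mem _ hx hy
  | smul c x _ hx => rw [map_smul]; exact Submodule.smul_mem _ _ hx

lemma pr_mem_line (a : ZMod 7) (ha : a ≠ 0) (v : Fin 8 → k) :
    pr ζ a v ∈ Submodule.span k {vv ζ a} := by
  have hv : v ∈ Submodule.span k (insert (e2 : Fin 8 → k) (Set.range (vv ζ))) := by
    rw [span_B ζ hord h7]; trivial
  induction hv using Submodule.span_induction with
  | mem x hx =>
    rcases Set.mem_insert_iff.mp hx with h | ⟨j, rfl⟩
    · rw [h, pr_e2 ζ hord h7, if_neg ha]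
      exact Submodule.zero_mem _
    · rw [pr_vv ζ hord h7]
      by_cases h : a = j
      · rw [if_pos h, ← h]
        exact Submodule.subset_span rfl
      · rw [if_neg h]
        exact Submodule.zero_mem _
  | zero => rw [map_zero]; exact Submodule.zero_mem _
  | add x y _ _ hx hy => rw [map_add]; exact Submodule.add_mem _ hx hy
  | smul c x _ hx => rw [map_smul]; exact Submodule.smul_mem _ _ hx

end proj

section helper

variable {k : Type*} [Field k]

theorem helper (ζ : k) (hord : orderOf ζ = 7) (h7 : (7 : k) = 1)
    (p : Submodule k (Fin 8 → k))
    (hpσ : ∀ v ∈ p, Ag k sg v ∈ p) (hpτ : ∀ v ∈ p, Ag k tu v ∈ p) :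
    ∃ q : Submodule k (Fin 8 → k),
      (∀ v ∈ q, Ag k sg v ∈ q) ∧ (∀ v ∈ q, Ag k sg⁻¹ v ∈ q) ∧
      (∀ v ∈ q, Ag k tu v ∈ q) ∧ (∀ v ∈ q, Ag k tu⁻¹ v ∈ q) ∧ IsCompl p q := by
  classical
  -- p is stable under powers of sg and under the projections
  have hpσn : ∀ n : ℕ, ∀ v ∈ p, Ag k (sg ^ n) v ∈ p := by
    intro n
    induction n with
    | zero => intro v hv; rw [pow_zero]; exact hv
    | succ n ih =>
      intro v hv
      rw [pow_succ, ← Ag_Ag]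
      exact ih _ (hpσ v hv)
  have hppr : ∀ a : ZMod 7, ∀ v ∈ p, pr ζ a v ∈ p := by
    intro a v hv
    rw [pr_apply]
    exact Submodule.sum_mem _ (fun m _ => Submodule.smul_mem _ _ (hpσn m.val v hv))
  -- complement inside the fixed space T
  set T : Submodule k (Fin 8 → k) := Tsub k ζ with hT
  obtain ⟨Q, hQ⟩ := Submodule.exists_isCompl (p.comap T.subtype)
  set qT : Submodule k (Fin 8 → k) := Q.map T.subtype with hqT
  have hqT_le : qT ≤ T := Submodule.map_subtype_le T Q
  -- the span of the eigenvectors not in p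
  set Sset : Set (Fin 8 → k) := {w | ∃ j : ZMod 7, j ≠ 0 ∧ vv ζ j ∉ p ∧ w = vv ζ j} with hSset
  set W : Submodule k (Fin 8 → k) := Submodule.span k Sset with hW
  -- pointwise fixing of T by the generators and their inverses
  have hfixσ : ∀ t ∈ T, Ag k sg t = t := by
    intro t ht
    have := Ag_sg_pow_T ζ hord 1 t ht
    rwa [pow_one] at this
  have hfixσ' : ∀ t ∈ T, Ag k sg⁻¹ t = t := by
    intro t ht
    conv_lhs => rw [← hfixσ t ht]
    exact Ag_inv_Ag sg t
  have hfixτ : ∀ t ∈ T, Ag k tu t = t := Ag_tu_T ζ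
  have hfixτ' : ∀ t ∈ T, Ag k tu⁻¹ t = t := by rw [tu_inv]; exact Ag_tu_T ζ
  -- action on the eigenvector span W
  have hinvvv : ∀ j : ZMod 7, Ag k sg⁻¹ (vv ζ j) = zp ζ (-j) • vv ζ j := by
    intro j
    have h1 : Ag k sg (zp ζ (-j) • vv ζ j) = vv ζ j := by
      rw [map_smul, Ag_sg_vv ζ hord, smul_smul, zp_neg_mul ζ hord, one_smul]
    conv_lhs => rw [← h1]
    exact Ag_inv_Ag sg _
  have hWgen : ∀ x ∈ Sset, ∃ j : ZMod 7, j ≠ 0 ∧ vv ζ j ∉ p ∧ x = vv ζ j := fun x hx => hx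
  have hWσ : ∀ w ∈ W, Ag k sg w ∈ W := by
    intro w hw
    induction hw using Submodule.span_induction with
    | mem x hx =>
      obtain ⟨j, hj0, hjp, rfl⟩ := hWgen x hx
      rw [Ag_sg_vv ζ hord]
      exact Submodule.smul_mem _ _ (Submodule.subset_span ⟨j, hj0, hjp, rfl⟩)
    | zero => simp
    | add x y _ _ hx hy => rw [map_add]; exact Submodule.add_mem _ hx hy
    | smul c x _ hx => rw [map_smul]; exact Submodule.smul_mem _ _ hx
  have hWσ' : ∀ w ∈ W, Ag k sg⁻¹ w ∈ W := by
    intro w hw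
    induction hw using Submodule.span_induction with
    | mem x hx =>
      obtain ⟨j, hj0, hjp, rfl⟩ := hWgen x hx
      rw [hinvvv]
      exact Submodule.smul_mem _ _ (Submodule.subset_span ⟨j, hj0, hjp, rfl⟩)
    | zero => simp
    | add x y _ _ hx hy => rw [map_add]; exact Submodule.add_mem _ hx hy
    | smul c x _ hx => rw [map_smul]; exact Submodule.smul_mem _ _ hx
  have hWτ : ∀ w ∈ W, Ag k tu w ∈ W := by
    intro w hw
    induction hw using Submodule.span_induction with
    | mem x hx =>
      obtain ⟨j, hj0, hjp, rfl⟩ := hWgen x hx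
      rw [Ag_tu_vv]
      have hnegp : vv ζ (-j) ∉ p := by
        intro hmem
        have := hpτ _ hmem
        rw [Ag_tu_vv, neg_neg] at this
        exact hjp this
      exact Submodule.subset_span ⟨-j, neg_ne_zero.mpr hj0, hnegp, rfl⟩
    | zero => simp
    | add x y _ _ hx hy => rw [map_add]; exact Submodule.add_mem _ hx hy
    | smul c x _ hx => rw [map_smul]; exact Submodule.smul_mem _ _ hx
  have hWτ' : ∀ w ∈ W, Ag k tu⁻¹ w ∈ W := by rw [tu_inv]; exact hWτ
  -- stability of qT ⊔ W
  have hstab : ∀ g : Equiv.Perm (Fin 8),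
      (∀ t ∈ T, Ag k g t = t) → (∀ w ∈ W, Ag k g w ∈ W) →
      ∀ v ∈ qT ⊔ W, Ag k g v ∈ qT ⊔ W := by
    intro g hgT hgW v hv
    obtain ⟨t, ht, w, hw, rfl⟩ := Submodule.mem_sup.mp hv
    rw [map_add, hgT t (hqT_le ht)]
    exact Submodule.add_mem _ (Submodule.mem_sup_left ht) (Submodule.mem_sup_right (hgW w hw))
  refine ⟨qT ⊔ W, hstab sg hfixσ hWσ, hstab sg⁻¹ hfixσ' hWσ',
    hstab tu hfixτ hWτ, hstab tu⁻¹ hfixτ' hWτ', ?_⟩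
  -- It remains to show IsCompl p (qT ⊔ W)
  have hTp_sup : (T ⊓ p) ⊔ qT = T := by
    rw [hqT, ← Submodule.map_comap_subtype, ← Submodule.map_sup, hQ.sup_eq_top,
      Submodule.map_top, Submodule.range_subtype]
  constructor
  · -- disjointness
    rw [disjoint_iff]
    rw [eq_bot_iff]
    intro v hv
    obtain ⟨hvp, hvq⟩ := Submodule.mem_inf.mp hv
    have hprW_gen : ∀ a : ZMod 7, (∀ j : ZMod 7, j ≠ 0 → vv ζ j ∉ p → a ≠ j) →
        ∀ w ∈ W, pr ζ a w = 0 := by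
      intro a hcond w hw
      induction hw using Submodule.span_induction with
      | mem x hx =>
        obtain ⟨j, hj0, hjp, rfl⟩ := hWgen x hx
        rw [pr_vv ζ hord h7, if_neg (hcond j hj0 hjp)]
      | zero => rw [map_zero]
      | add x y _ _ hx hy => rw [map_add, hx, hy, add_zero]
      | smul c x _ hx => rw [map_smul, hx, smul_zero]
    obtain ⟨t, ht, w, hw, hvtw⟩ := Submodule.mem_sup.mp hvq
    -- all projections of v vanish
    have hpr0 : ∀ a : ZMod 7, pr ζ a v = 0 := by
      intro a
      by_cases ha : a = 0
      · -- the 0-projection lies in (T ⊓ p) ⊓ qT = ⊥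
        subst ha
        have hprW : pr ζ 0 w = 0 :=
          hprW_gen 0 (fun j hj0 _ h => hj0 h.symm) w hw
        have hprt : pr ζ 0 t = t := by
          rw [pr_T ζ hord h7 0 t (hqT_le ht), if_pos rfl]
        have hveq : pr ζ 0 v = t := by rw [← hvtw, map_add, hprW, hprt, add_zero]
        have h1 : t ∈ (T ⊓ p) ⊓ qT := by
          refine Submodule.mem_inf.mpr ⟨Submodule.mem_inf.mpr ⟨?_, ?_⟩, ht⟩
          · rw [← hveq]; exact pr0_mem_T ζ hord h7 v
          · rw [← hveq]; exact hppr 0 v hvp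
        have h2 : (T ⊓ p) ⊓ qT = ⊥ := by
          rw [hqT, show T ⊓ p = Submodule.map T.subtype (Submodule.comap T.subtype p) from
              (Submodule.map_comap_subtype T p).symm,
            ← Submodule.map_inf _ (Submodule.injective_subtype T),
            hQ.inf_eq_bot, Submodule.map_bot]
        rw [hveq]
        rw [h2] at h1
        exact h1
      · by_cases hvap : vv ζ a ∈ p
        · -- projection of w is 0 because a isn't an index of Sset
          have hprW : pr ζ a w = 0 :=
            hprW_gen a (fun j _ hjp h => hjp (by rw [← h]; exact hvap)) w hw
          have hprt : pr ζ a t = 0 := by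
            rw [pr_T ζ hord h7 a t (hqT_le ht), if_neg ha]
          rw [← hvtw, map_add, hprW, hprt, add_zero]
        · -- projection of v lies in p ∩ span {vv a}, forcing it to vanish
          have h1 : pr ζ a v ∈ Submodule.span k {vv ζ a} := pr_mem_line ζ hord h7 a ha v
          obtain ⟨c, hc⟩ := Submodule.mem_span_singleton.mp h1
          by_cases hc0 : c = 0
          · rw [← hc, hc0, zero_smul]
          · exfalso
            apply hvap
            have : vv ζ a = c⁻¹ • pr ζ a v := by
              rw [← hc, smul_smul, inv_mul_cancel₀ hc0, one_smul]
            rw [this]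
            exact Submodule.smul_mem _ _ (hppr a v hvp)
    have := pr_sum ζ hord h7 v
    rw [Finset.sum_congr rfl (fun a _ => hpr0 a), Finset.sum_const_zero] at this
    rw [← this]
    exact Submodule.zero_mem ⊥
  · -- codisjointness
    rw [codisjoint_iff, eq_top_iff, ← span_B ζ hord h7, Submodule.span_le]
    intro x hx
    have hT_le : T ≤ p ⊔ (qT ⊔ W) := by
      rw [← hTp_sup]
      apply sup_le
      · exact inf_le_right.trans le_sup_left
      · exact le_sup_left.trans le_sup_right
    rcases Set.mem_insert_iff.mp hx with h | ⟨j, rfl⟩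
    · exact h ▸ hT_le (e2_mem_T ζ)
    · by_cases hj0 : j = 0
      · exact hj0 ▸ hT_le (vv0_mem_T ζ)
      · by_cases hjp : vv ζ j ∈ p
        · exact Submodule.mem_sup_left hjp
        · exact Submodule.mem_sup_right
            (Submodule.mem_sup_right (Submodule.subset_span ⟨j, hj0, hjp, rfl⟩))

end helper

end Stmt12

open Stmt12

/-- The natural 8-dimensional permutation module `k^8` over an algebraically closed field `k`
of characteristic 2, for the given subgroup `K` of the symmetric group (acting by permuting the
standard basis vectors, `g • v = fun i => v (g⁻¹ i)`, so that `g • e_i = e_(g i)`), is semisimple: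
every `K`-invariant subspace admits a `K`-invariant direct complement. -/
theorem stmt_12 (k : Type*) [Field k] [IsAlgClosed k] [CharP k 2]
    (K : Subgroup (Equiv.Perm (Fin 8)))
    (hK : K = Subgroup.closure
      { c[(1 : Fin 8), 5] * c[(3 : Fin 8), 4] * c[(6 : Fin 8), 7],
      c[(0 : Fin 8), 3, 1, 7, 6, 5, 4] })
    (p : Submodule k (Fin 8 → k))
    (hp : ∀ g ∈ K, ∀ v ∈ p, (fun i => v (g⁻¹ i)) ∈ p) :
    ∃ q : Submodule k (Fin 8 → k),
      (∀ g ∈ K, ∀ v ∈ q, (fun i => v (g⁻¹ i)) ∈ q) ∧ IsCompl p q := by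
  -- characteristic facts
  have h7 : (7 : k) = 1 := by
    have h2 : (2 : k) = 0 := by exact_mod_cast CharP.cast_eq_zero k 2
    linear_combination 3 * h2
  -- a primitive 7th root of unity
  have h7N : NeZero ((7 : ℕ) : k) := by
    constructor
    have : ((7 : ℕ) : k) = 1 := by push_cast; exact h7
    rw [this]
    exact one_ne_zero
  obtain ⟨ζ, hζ⟩ := HasEnoughRootsOfUnity.prim (M := k) (n := 7)
  have hord : orderOf ζ = 7 := (IsPrimitiveRoot.eq_orderOf hζ).symm
  -- the generators belong to K
  have htu_mem : tu ∈ K := by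
    rw [hK]
    exact Subgroup.subset_closure (Set.mem_insert _ _)
  have hsg_mem : sg ∈ K := by
    rw [hK]
    exact Subgroup.subset_closure (Set.mem_insert_iff.mpr (Or.inr rfl))
  -- p is stable under the generators
  have hpσ : ∀ v ∈ p, Ag k sg v ∈ p := fun v hv => hp sg hsg_mem v hv
  have hpτ : ∀ v ∈ p, Ag k tu v ∈ p := fun v hv => hp tu htu_mem v hv
  obtain ⟨q, hqσ, hqσ', hqτ, hqτ', hcompl⟩ := helper ζ hord h7 p hpσ hpτ
  refine ⟨q, ?_, hcompl⟩
  -- stability of q under all of K, by closure induction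
  intro g hg
  rw [hK] at hg
  have main : (∀ v ∈ q, Ag k g v ∈ q) ∧ (∀ v ∈ q, Ag k g⁻¹ v ∈ q) := by
    induction hg using Subgroup.closure_induction with
    | mem x hx =>
      rcases Set.mem_insert_iff.mp hx with h | h
      · subst h
        exact ⟨hqτ, hqτ'⟩
      · rw [Set.mem_singleton_iff.mp h]
        exact ⟨hqσ, hqσ'⟩
    | one =>
      constructor <;> intro v hv
      · rw [Ag_one]; exact hv
      · rw [inv_one, Ag_one]; exact hv
    | mul x y hx hy ihx ihy =>
      constructor <;> intro v hv
      · rw [← Ag_Ag]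
        exact ihx.1 _ (ihy.1 v hv)
      · rw [mul_inv_rev, ← Ag_Ag]
        exact ihy.2 _ (ihx.2 v hv)
    | inv x hx ihx =>
      refine ⟨ihx.2, ?_⟩
      rw [inv_inv]
      exact ihx.1
  exact main.1
end

section
/- Let k be an algebraically closed field of characteristic 2 and let K ≤ S₈ be the subgroup generated by the permutations (1 7 5)(2 6 8), (1 2)(5 8)(6 7) and (1 2 7 5 4 8 6) (a group of order 42). Then the natural 8-dimensional permutation module k⁸, on which K acts by permuting the standard basis vectors, is a semisimple K-module: every K-invariant subspace of k⁸ admits a K-invariant direct complement. -/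
/-!
Let `σ` be the 7-cycle among the generators and `c` the point fixed by `K`. Since `7` is odd, `σ`
acts semisimply in characteristic 2, so every `σ`-invariant subspace is the sum of its
intersections with the eigenspaces of `σ`. The eigenvalue-1 space `T = constOff c` consists of
the vectors constant off `c`, on which `K` acts trivially; every other eigenspace is a line inside
the augmentation part `S = augmentationOff c`, and `k⁸ = T ⊕ S`. Hence an invariant `p` splits as
`(p ⊓ T) ⊕ (p ⊓ S)`. The product `τ` of the other two generators satisfies `σ τ = τ σ⁵`, so it
carries the `μ`-eigenline to the `μ⁵`-eigenline; as `5` generates `(ℤ/7)ˣ`, a nonzero `p ⊓ S`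
meets every eigenline in `S`, so `p ⊓ S` is `0` or `S`. A complement of `p ⊓ T` in `T`, plus `S`
or `0`, is then an invariant complement of `p`.
-/

open Module End Equiv

section Eigenspaces

variable {F V : Type*} [Field F] [AddCommGroup V] [Module F V] {f g : Module.End F V}

theorem Module.End.isSemisimple_of_pow_eq_one {n : ℕ} (hn : (n : F) ≠ 0) (hf : f ^ n = 1) :
    f.IsSemisimple :=
  isSemisimple_of_squarefree_aeval_eq_zero
    (Polynomial.separable_X_pow_sub_C 1 hn one_ne_zero).squarefree (by simp [hf])

theorem Module.End.pow_eq_one_of_eigenspace_ne_bot {n : ℕ} (hf : f ^ n = 1) {μ : F}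
    (hμ : f.eigenspace μ ≠ ⊥) : μ ^ n = 1 := by
  obtain ⟨x, hx, hx0⟩ := (Submodule.ne_bot_iff _).mp hμ
  have hfx : (f ^ n) x = μ ^ n • x := HasEigenvector.pow_apply ⟨hx, hx0⟩ n
  rw [hf, one_apply] at hfx
  exact smul_left_injective F hx0 (by simpa using hfx.symm)

theorem Module.End.mapsTo_eigenspace_of_mul_eq {m : ℕ} (h : f * g = g * f ^ m) (μ : F) :
    Set.MapsTo g (f.eigenspace μ) (f.eigenspace (μ ^ m)) := by
  intro x hx
  have hfx : (f ^ m) x = μ ^ m • x := by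
    rcases eq_or_ne x 0 with rfl | hx0
    · simp
    · exact HasEigenvector.pow_apply ⟨hx, hx0⟩ m
  rw [SetLike.mem_coe, mem_eigenspace_iff, ← mul_apply, h, mul_apply, hfx, map_smul]

theorem Submodule.inf_eigenspace_pow_pow_ne_bot {m : ℕ} (h : f * g = g * f ^ m)
    (hg : Function.Injective g) {p : Submodule F V} (hp : p ∈ g.invtSubmodule) {μ : F}
    (hμ : p ⊓ f.eigenspace μ ≠ ⊥) (j : ℕ) : p ⊓ f.eigenspace (μ ^ m ^ j) ≠ ⊥ := by
  induction j with
  | zero => simpa using hμ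
  | succ j ih =>
    obtain ⟨x, ⟨hxp, hxμ⟩, hx0⟩ := (Submodule.ne_bot_iff _).mp ih
    rw [pow_succ, pow_mul]
    refine (Submodule.ne_bot_iff _).mpr ⟨g x, ⟨hp hxp, ?_⟩, (map_ne_zero_iff g hg).mpr hx0⟩
    exact mapsTo_eigenspace_of_mul_eq h _ hxμ

theorem Submodule.eq_iSup_inf_eigenspace [IsAlgClosed F] [FiniteDimensional F V]
    (hf : f.IsSemisimple) {p : Submodule F V} (hp : p ∈ f.invtSubmodule) :
    p = ⨆ μ, p ⊓ f.eigenspace μ := by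
  conv_lhs => rw [← inf_top_eq p, ← hf.iSup_eigenspace_eq_top]
  exact Submodule.inf_iSup_genEigenspace hp 1

end Eigenspaces

theorem IsCompl.isCompl_sup_of_le_inf_sup_inf {α : Type*} [Lattice α] [BoundedOrder α]
    [IsModularLattice α] {t s p a b : α} (hts : IsCompl t s) (hp : p ≤ p ⊓ t ⊔ p ⊓ s)
    (ha : Disjoint (p ⊓ t) a) (hta : p ⊓ t ⊔ a = t)
    (hb : Disjoint (p ⊓ s) b) (hsb : p ⊓ s ⊔ b = s) :
    IsCompl p (a ⊔ b) := by
  have h₁ : Disjoint (p ⊓ t ⊔ a) (p ⊓ s ⊔ b) := by rw [hta, hsb]; exact hts.disjoint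
  have h₂ : Disjoint (p ⊓ t) (p ⊓ s ⊔ (a ⊔ b)) := by
    rw [sup_left_comm]; exact ha.disjoint_sup_right_of_disjoint_sup_left h₁
  have h₃ : Disjoint (p ⊓ s) (a ⊔ b) := by
    rw [sup_comm]
    exact hb.disjoint_sup_right_of_disjoint_sup_left (h₁.symm.mono_right le_sup_right)
  refine ⟨(h₃.disjoint_sup_left_of_disjoint_sup_right h₂).mono_left hp, ?_⟩
  rw [codisjoint_iff, eq_top_iff, ← hts.sup_eq_top, ← hta, ← hsb]
  exact sup_le (sup_le_sup inf_le_left le_sup_left) (sup_le_sup inf_le_left le_sup_right)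

theorem exists_pow_five_pow_eq {R : Type*} [CommRing R] [IsDomain R] {ν μ : R} (hν : ν ^ 7 = 1)
    (hν1 : ν ≠ 1) (hμ : μ ^ 7 = 1) (hμ1 : μ ≠ 1) : ∃ j, ν ^ 5 ^ j = μ := by
  have hprim : IsPrimitiveRoot ν 7 :=
    IsPrimitiveRoot.iff_orderOf.mpr (orderOf_eq_prime (hp := ⟨by norm_num⟩) hν hν1)
  obtain ⟨i, hi, rfl⟩ := hprim.eq_pow_of_pow_eq_one hμ
  have hi0 : i ≠ 0 := by rintro rfl; exact hμ1 (pow_zero ν)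
  -- `5` is a primitive root modulo `7`
  have h5 : ∀ i < 7, i ≠ 0 → ∃ j < 6, 5 ^ j % 7 = i := by decide
  obtain ⟨j, -, hj⟩ := h5 i hi hi0
  exact ⟨j, by rw [pow_eq_pow_mod _ hν, hj]⟩

namespace PermModule

variable {k ι : Type*} [Field k]

def permRep : Representation k (Perm ι) (ι → k) where
  toFun g := LinearMap.funLeft k k ⇑g⁻¹
  map_one' := rfl
  map_mul' _ _ := rfl

@[simp]
theorem permRep_apply (g : Perm ι) (v : ι → k) (i : ι) : permRep g v i = v (g⁻¹ i) := rfl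

def constOff (c : ι) : Submodule k (ι → k) where
  carrier := {v | ∀ i ≠ c, ∀ j ≠ c, v i = v j}
  add_mem' ha hb i hi j hj := by simp [ha i hi j hj, hb i hi j hj]
  zero_mem' _ _ _ _ := rfl
  smul_mem' r _ hv i hi j hj := by simp [hv i hi j hj]

def augmentationOff [Fintype ι] (c : ι) : Submodule k (ι → k) where
  carrier := {v | v c = 0 ∧ ∑ i, v i = 0}
  add_mem' ha hb := ⟨by simp [ha.1, hb.1], by simp [Finset.sum_add_distrib, ha.2, hb.2]⟩
  zero_mem' := by simp
  smul_mem' r _ hv := ⟨by simp [hv.1], by simp [← Finset.mul_sum, hv.2]⟩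

variable {c : ι} {g : Perm ι}

theorem permRep_apply_eq_self_of_mem_constOff (hg : g c = c) {v : ι → k} (hv : v ∈ constOff c) :
    permRep g v = v := by
  have hg' : g⁻¹ c = c := by rw [Perm.inv_eq_iff_eq, hg]
  funext i
  rcases eq_or_ne i c with rfl | hi
  · simp [hg']
  · exact hv _ (fun h => hi ((Perm.inv_eq_iff_eq.mp h).trans hg)) _ hi

theorem mem_invtSubmodule_of_le_constOff (hg : g c = c) {q : Submodule k (ι → k)}
    (hq : q ≤ constOff c) : q ∈ invtSubmodule (permRep g) :=
  (mem_invtSubmodule_iff_forall_mem_of_mem _).mpr fun v hv => by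
    rwa [permRep_apply_eq_self_of_mem_constOff hg (hq hv)]

theorem augmentationOff_mem_invtSubmodule [Fintype ι] (hg : g c = c) :
    (augmentationOff c : Submodule k (ι → k)) ∈ invtSubmodule (permRep g) := by
  have hg' : g⁻¹ c = c := by rw [Perm.inv_eq_iff_eq, hg]
  refine (mem_invtSubmodule_iff_forall_mem_of_mem _).mpr fun v hv => show _ ∧ _ from ⟨?_, ?_⟩
  · simpa [hg'] using hv.1
  · simpa [Equiv.sum_comp] using hv.2

theorem disjoint_constOff_augmentationOff [Fintype ι]
    (hcard : ((Fintype.card ι - 1 : ℕ) : k) ≠ 0) :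
    Disjoint (constOff c) (augmentationOff c : Submodule k (ι → k)) := by
  classical
  refine Submodule.disjoint_def.mpr fun v hT hS => funext fun i => ?_
  rcases eq_or_ne i c with rfl | hi
  · exact hS.1
  have hsum : ∑ j, v j = ((Fintype.card ι - 1 : ℕ) : k) * v i := by
    rw [← Finset.add_sum_erase _ _ (Finset.mem_univ c), hS.1, zero_add,
      Finset.sum_congr rfl fun j hj => hT j (Finset.ne_of_mem_erase hj) i hi, Finset.sum_const,
      Finset.card_erase_of_mem (Finset.mem_univ c), Finset.card_univ, nsmul_eq_mul]
  simpa [hcard] using hsum.symm.trans hS.2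

variable {σ : Perm ι} {μ : k} {x : ι → k}

theorem mem_eigenspace_permRep_iff :
    x ∈ eigenspace (permRep σ) μ ↔ ∀ i, x (σ⁻¹ i) = μ * x i := by
  simp [funext_iff]

theorem exists_apply_eq_pow_mul_of_sameCycle [Finite ι] (hx : x ∈ eigenspace (permRep σ) μ)
    {i j : ι} (hij : σ.SameCycle i j) : ∃ n : ℕ, x j = μ ^ n * x i := by
  obtain ⟨n, -, rfl⟩ := (Perm.sameCycle_inv.mpr hij).exists_nat_pow_eq
  clear hij
  refine ⟨n, ?_⟩
  induction n with
  | zero => simp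
  | succ n ih =>
    rw [pow_succ', Perm.mul_apply, mem_eigenspace_permRep_iff.mp hx, ih, pow_succ', mul_assoc]

theorem eigenspace_le_augmentationOff [Fintype ι] (hσ : σ c = c) (hμ : μ ≠ 1) :
    eigenspace (permRep σ) μ ≤ augmentationOff c := by
  have eq_zero {a : k} (h : a = μ * a) : a = 0 := by
    by_contra ha; exact hμ ((mul_eq_right₀ ha).mp h.symm)
  intro x hx
  rw [mem_eigenspace_permRep_iff] at hx
  refine ⟨eq_zero ?_, eq_zero ?_⟩
  · rw [← hx, Perm.inv_eq_iff_eq.mpr hσ.symm]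
  · rw [Finset.mul_sum, ← Equiv.sum_comp σ⁻¹]; exact Finset.sum_congr rfl fun i _ => hx i

variable {c₀ : ι}

theorem eigenspace_one_le_constOff [Finite ι] (hcyc : ∀ i ≠ c, σ.SameCycle c₀ i) :
    eigenspace (permRep σ) (1 : k) ≤ constOff c := by
  intro x hx i hi j hj
  obtain ⟨m, hm⟩ := exists_apply_eq_pow_mul_of_sameCycle hx (hcyc i hi)
  obtain ⟨n, hn⟩ := exists_apply_eq_pow_mul_of_sameCycle hx (hcyc j hj)
  rw [hm, hn, one_pow, one_pow]

theorem eigenspace_le_of_inf_ne_bot [Fintype ι] (hσ : σ c = c) (hcyc : ∀ i ≠ c, σ.SameCycle c₀ i)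
    (hμ : μ ≠ 1) {p : Submodule k (ι → k)} (hp : p ⊓ eigenspace (permRep σ) μ ≠ ⊥) :
    eigenspace (permRep σ) μ ≤ p := by
  have eq_zero {z : ι → k} (hz : z ∈ eigenspace (permRep σ) μ) (hz₀ : z c₀ = 0) : z = 0 := by
    funext i
    rcases eq_or_ne i c with rfl | hi
    · exact (eigenspace_le_augmentationOff hσ hμ hz).1
    · obtain ⟨n, hn⟩ := exists_apply_eq_pow_mul_of_sameCycle hz (hcyc i hi)
      simp [hn, hz₀]
  obtain ⟨y, ⟨hyp, hy⟩, hy0⟩ := (Submodule.ne_bot_iff _).mp hp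
  have hy₀ : y c₀ ≠ 0 := fun h => hy0 (eq_zero hy h)
  intro x hx
  have hxy : x = (x c₀ / y c₀) • y := by
    refine sub_eq_zero.mp (eq_zero (sub_mem hx (Submodule.smul_mem _ _ hy)) ?_)
    simp [hy₀]
  rw [hxy]
  exact p.smul_mem _ hyp

theorem le_inf_constOff_sup_inf_augmentationOff [IsAlgClosed k] [Fintype ι]
    (hss : IsSemisimple (permRep σ : End k (ι → k))) (hσ : σ c = c)
    (hcyc : ∀ i ≠ c, σ.SameCycle c₀ i) {p : Submodule k (ι → k)}
    (hp : p ∈ invtSubmodule (permRep σ)) :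
    p ≤ p ⊓ constOff c ⊔ p ⊓ augmentationOff c := by
  refine (Submodule.eq_iSup_inf_eigenspace hss hp).le.trans (iSup_le fun μ => ?_)
  rcases eq_or_ne μ 1 with rfl | hμ
  · exact le_sup_of_le_left (inf_le_inf_left _ (eigenspace_one_le_constOff hcyc))
  · exact le_sup_of_le_right (inf_le_inf_left _ (eigenspace_le_augmentationOff hσ hμ))

theorem inf_augmentationOff_eq_bot_or_le [IsAlgClosed k] [Fintype ι] {τ : Perm ι}
    (hss : IsSemisimple (permRep σ : End k (ι → k))) (hσ7 : σ ^ 7 = 1)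
    (hστ : σ * τ = τ * σ ^ 5) (hσ : σ c = c) (hcyc : ∀ i ≠ c, σ.SameCycle c₀ i)
    (hcard : ((Fintype.card ι - 1 : ℕ) : k) ≠ 0) {p : Submodule k (ι → k)}
    (hpσ : p ∈ invtSubmodule (permRep σ)) (hpτ : p ∈ invtSubmodule (permRep τ)) :
    p ⊓ augmentationOff c = ⊥ ∨ augmentationOff c ≤ p := by
  have hS := augmentationOff_mem_invtSubmodule (k := k) hσ
  have hSE : Disjoint (augmentationOff c) (eigenspace (permRep σ) (1 : k)) :=
    (disjoint_constOff_augmentationOff hcard).symm.mono_right (eigenspace_one_le_constOff hcyc)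
  have hroot (μ : k) : eigenspace (permRep σ) μ ≠ ⊥ → μ ^ 7 = 1 :=
    pow_eq_one_of_eigenspace_ne_bot (by rw [← map_pow, hσ7, map_one])
  refine or_iff_not_imp_left.mpr fun hpS => ?_
  obtain ⟨ν, hν⟩ : ∃ ν, p ⊓ augmentationOff c ⊓ eigenspace (permRep σ) ν ≠ ⊥ := by
    by_contra! h
    rw [Submodule.eq_iSup_inf_eigenspace hss (invtSubmodule.inf_mem hpσ hS)] at hpS
    simp [h] at hpS
  have hν1 : ν ≠ 1 := by
    rintro rfl
    exact hν (hSE.mono_left inf_le_right).eq_bot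
  have hνp : p ⊓ eigenspace (permRep σ) ν ≠ ⊥ :=
    ne_bot_of_le_ne_bot hν (inf_le_inf_right _ inf_le_left)
  have hν7 := hroot ν (ne_bot_of_le_ne_bot hν inf_le_right)
  rw [Submodule.eq_iSup_inf_eigenspace hss hS]
  refine iSup_le fun μ => ?_
  by_cases hμ : augmentationOff c ⊓ eigenspace (permRep σ) μ = ⊥
  · simp [hμ]
  have hμ1 : μ ≠ 1 := by
    rintro rfl
    exact hμ hSE.eq_bot
  obtain ⟨j, rfl⟩ :=
    exists_pow_five_pow_eq hν7 hν1 (hroot μ (ne_bot_of_le_ne_bot hμ inf_le_right)) hμ1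
  have hpμ := Submodule.inf_eigenspace_pow_pow_ne_bot
    (by rw [← map_pow, ← map_mul, ← map_mul, hστ]) (permRep.apply_bijective τ).1 hpτ hνp j
  exact inf_le_right.trans (eigenspace_le_of_inf_ne_bot hσ hcyc hμ1 hpμ)

theorem exists_invariant_isCompl [IsAlgClosed k] [Fintype ι] (K : Subgroup (Perm ι))
    {τ : Perm ι} (hK : ∀ g ∈ K, g c = c) (hσK : σ ∈ K) (hτK : τ ∈ K)
    (hσ7 : σ ^ 7 = 1) (hστ : σ * τ = τ * σ ^ 5) (hcyc : ∀ i ≠ c, σ.SameCycle c₀ i)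
    (h7 : (7 : k) ≠ 0) (hcard : ((Fintype.card ι - 1 : ℕ) : k) ≠ 0) {p : Submodule k (ι → k)}
    (hp : ∀ g ∈ K, p ∈ invtSubmodule (permRep g)) :
    ∃ q : Submodule k (ι → k), (∀ g ∈ K, q ∈ invtSubmodule (permRep g)) ∧ IsCompl p q := by
  have hss : IsSemisimple (permRep σ : End k (ι → k)) :=
    isSemisimple_of_pow_eq_one h7 (by rw [← map_pow, hσ7, map_one])
  have hdecomp {p : Submodule k (ι → k)} (hp : p ∈ invtSubmodule (permRep σ)) :
      p ≤ p ⊓ constOff c ⊔ p ⊓ augmentationOff c :=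
    le_inf_constOff_sup_inf_augmentationOff hss (hK σ hσK) hcyc hp
  have hTS : IsCompl (constOff c) (augmentationOff c : Submodule k (ι → k)) :=
    ⟨disjoint_constOff_augmentationOff hcard,
      codisjoint_iff.mpr (top_le_iff.mp (by simpa using hdecomp (invtSubmodule.top_mem _)))⟩
  obtain ⟨a, haT, hpa, hpat⟩ :=
    Set.Iic.complementedLattice_iff.mp inferInstance (p ⊓ constOff c) inf_le_right
  obtain ⟨b, hb, hpb, hpbS⟩ : ∃ b, (∀ g ∈ K, b ∈ invtSubmodule (permRep g)) ∧
      Disjoint (p ⊓ augmentationOff c) b ∧ p ⊓ augmentationOff c ⊔ b = augmentationOff c := by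
    rcases inf_augmentationOff_eq_bot_or_le hss hσ7 hστ (hK σ hσK) hcyc hcard (hp σ hσK)
      (hp τ hτK) with h | h
    · exact ⟨augmentationOff c, fun g hg => augmentationOff_mem_invtSubmodule (hK g hg),
        by simp [h], by simp [h]⟩
    · exact ⟨⊥, fun g _ => invtSubmodule.bot_mem _, disjoint_bot_right, by simp [h]⟩
  exact ⟨a ⊔ b, fun g hg => invtSubmodule.sup_mem (mem_invtSubmodule_of_le_constOff (hK g hg) haT)
    (hb g hg), hTS.isCompl_sup_of_le_inf_sup_inf (hdecomp (hp σ hσK)) (disjoint_iff.mpr hpa)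
    hpat hpb hpbS⟩

end PermModule

/-- The natural 8-dimensional permutation module `k^8` over an algebraically closed field `k`
of characteristic 2, for the given subgroup `K` of the symmetric group (acting by permuting the
standard basis vectors, `g • v = fun i => v (g⁻¹ i)`, so that `g • e_i = e_(g i)`), is semisimple:
every `K`-invariant subspace admits a `K`-invariant direct complement. -/
theorem stmt_13 (k : Type*) [Field k] [IsAlgClosed k] [CharP k 2]
    (K : Subgroup (Equiv.Perm (Fin 8)))
    (hK : K = Subgroup.closure
      { c[(0 : Fin 8), 6, 4] * c[(1 : Fin 8), 5, 7],
      c[(0 : Fin 8), 1] * c[(4 : Fin 8), 7] * c[(5 : Fin 8), 6],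
      c[(0 : Fin 8), 1, 6, 4, 3, 7, 5] })
    (p : Submodule k (Fin 8 → k))
    (hp : ∀ g ∈ K, ∀ v ∈ p, (fun i => v (g⁻¹ i)) ∈ p) :
    ∃ q : Submodule k (Fin 8 → k),
      (∀ g ∈ K, ∀ v ∈ q, (fun i => v (g⁻¹ i)) ∈ q) ∧ IsCompl p q := by
  have h7 : (7 : k) ≠ 0 := by
    rw [Ne, ← Nat.cast_ofNat, CharP.cast_eq_zero_iff k 2]
    norm_num
  have hfix : K ≤ MulAction.stabilizer (Perm (Fin 8)) (2 : Fin 8) := by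
    rw [hK, Subgroup.closure_le, Set.insert_subset_iff, Set.insert_subset_iff,
      Set.singleton_subset_iff]
    exact ⟨rfl, rfl, rfl⟩
  obtain ⟨q, hq, hpq⟩ := PermModule.exists_invariant_isCompl (k := k) K (c₀ := 0)
    (σ := c[(0 : Fin 8), 1, 6, 4, 3, 7, 5])
    (τ := c[(0 : Fin 8), 6, 4] * c[(1 : Fin 8), 5, 7] *
      (c[(0 : Fin 8), 1] * c[(4 : Fin 8), 7] * c[(5 : Fin 8), 6]))
    (fun g hg => hfix hg) (hK ▸ Subgroup.subset_closure (by simp))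
    (hK ▸ mul_mem (Subgroup.subset_closure (by simp)) (Subgroup.subset_closure (by simp)))
    (by decide +kernel) (by decide +kernel) (by decide) h7 (by simpa using h7)
    (fun g hg => (mem_invtSubmodule_iff_forall_mem_of_mem _).mpr (hp g hg))
  exact ⟨q, fun g hg => (mem_invtSubmodule_iff_forall_mem_of_mem _).mp (hq g hg), hpq⟩
end
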